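/- arXiv:1707.08461 — 6 statements merged into one kernel-verified Lean document; each statement's English description precedes it below -/
import Mathlib

section
/- Let A be an n×n complex random matrix with arbitrary distribution, let M ≥ 1 and let ε, p₀, δ ∈ (0,1/2) with εn a positive integer. Assume that for every number λ₀ ∈ ℂ with |λ₀| ≤ M√n and every set I ⊆ {1,…,n} with |I| = εn, one has P( s_min((A − λ₀ I_n)_{I^c}) ≤ 8δM√n and ‖A‖ ≤ M√n ) ≤ p₀. Then P( Loc(A, ε, δ) and ‖A‖ ≤ M√n ) ≤ 5 δ^{−2} (e/ε)^{εn} p₀, where Loc(A, ε, δ) is the event that there exist a unit eigenvector v ∈ ℂⁿ of A and a set I ⊆ {1,…,n} with |I| = εn such that ‖v_I‖₂ < δ. -/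
open MeasureTheory ProbabilityTheory Matrix

/-- The Euclidean norm of a finitely supported complex vector. -/
noncomputable def eNormC {ι : Type*} [Fintype ι] (v : ι → ℂ) : ℝ :=
  Real.sqrt (∑ i, ‖v i‖ ^ 2)

/-- The Euclidean norm of the restriction of `v` to the coordinates in `I`. -/
noncomputable def eNormSub {n : ℕ} (v : Fin n → ℂ) (I : Finset (Fin n)) : ℝ :=
  Real.sqrt (∑ i ∈ I, ‖v i‖ ^ 2)

/-- The smallest singular value of a rectangular matrix: the infimum of `‖Bx‖₂`
over unit vectors `x`. -/
noncomputable def sMin {N : ℕ} {m : Type*} [Fintype m] (B : Matrix (Fin N) m ℂ) : ℝ :=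
  sInf {r | ∃ x : m → ℂ, eNormC x = 1 ∧ r = eNormC (B *ᵥ x)}

/-- The submatrix of an `n × n` matrix `B` consisting of the columns outside `I`. -/
def colsOutside {n : ℕ} (B : Matrix (Fin n) (Fin n) ℂ) (I : Finset (Fin n)) :
    Matrix (Fin n) {j : Fin n // j ∉ I} ℂ :=
  B.submatrix id fun j : {j : Fin n // j ∉ I} => (j : Fin n)


/-!
On the event, an eigenvector `v` with eigenvalue `λ` satisfies `|λ| ≤ M√n`, and `v` has mass
less than `δ` on some `I` with `|I| = εn`. For `λ₀` within `3√2 δ M√n` of `λ`, the vector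
`(A - λ₀)_{Iᶜ} v_{Iᶜ} = (λ - λ₀) v - (A - λ₀) v_I` has norm at most `(3√2 + 2) δ M√n`, while
`‖v_{Iᶜ}‖ ≥ √(1 - δ²)`; hence `s_min((A - λ₀)_{Iᶜ}) ≤ 8 δ M√n`. Letting `λ₀` range over a net of
the disc of radius `M√n` with at most `5 / δ²` points (a grid of mesh about `3δ M√n`, pulled into
the disc at the cost of doubling its radius) and `I` over the `(n choose εn) ≤ (e/ε)^{εn}`
subsets, a union bound concludes.
-/

section EuclideanNorm

variable {ι : Type*} [Fintype ι]

lemma eNormC_eq_norm (v : ι → ℂ) : eNormC v = ‖WithLp.toLp 2 v‖ := by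
  rw [EuclideanSpace.norm_eq]; rfl

lemma eNormC_nonneg (v : ι → ℂ) : 0 ≤ eNormC v := Real.sqrt_nonneg _

lemma eNormC_smul (c : ℂ) (v : ι → ℂ) : eNormC (c • v) = ‖c‖ * eNormC v := by
  simp only [eNormC_eq_norm, WithLp.toLp_smul, norm_smul]

lemma eNormC_sub_le (v w : ι → ℂ) : eNormC (v - w) ≤ eNormC v + eNormC w := by
  simp only [eNormC_eq_norm, WithLp.toLp_sub]
  exact norm_sub_le _ _

end EuclideanNorm

section SmallestSingularValue

variable {N : ℕ} {m : Type*} [Fintype m]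

lemma sMin_nonneg (B : Matrix (Fin N) m ℂ) : 0 ≤ sMin B :=
  Real.sInf_nonneg fun _ ⟨_, _, hr⟩ => hr ▸ eNormC_nonneg _

lemma sMin_mul_eNormC_le (B : Matrix (Fin N) m ℂ) (x : m → ℂ) :
    sMin B * eNormC x ≤ eNormC (B *ᵥ x) := by
  rcases (eNormC_nonneg x).eq_or_lt with hx | hx
  · rw [← hx, mul_zero]
    exact eNormC_nonneg _
  have hnorm : ‖((eNormC x : ℂ))⁻¹‖ = (eNormC x)⁻¹ := by
    rw [norm_inv, Complex.norm_real, Real.norm_of_nonneg hx.le]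
  have hunit : eNormC ((eNormC x : ℂ)⁻¹ • x) = 1 := by
    rw [eNormC_smul, hnorm, inv_mul_cancel₀ hx.ne']
  have hle : sMin B ≤ eNormC (B *ᵥ ((eNormC x : ℂ)⁻¹ • x)) :=
    csInf_le ⟨0, fun _ ⟨_, _, hr⟩ => hr ▸ eNormC_nonneg _⟩ ⟨_, hunit, rfl⟩
  rw [mulVec_smul, eNormC_smul, hnorm, ← div_eq_inv_mul, le_div_iff₀ hx] at hle
  exact hle

end SmallestSingularValue

section Columns

variable {n : ℕ}

lemma colsOutside_mulVec (B : Matrix (Fin n) (Fin n) ℂ) (I : Finset (Fin n)) (v : Fin n → ℂ) :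
    colsOutside B I *ᵥ (fun j : {j // j ∉ I} => v j) =
      B *ᵥ v - B *ᵥ (fun j => if j ∈ I then v j else 0) := by
  ext i
  rw [Pi.sub_apply, ← Pi.sub_apply (B *ᵥ v), ← mulVec_sub]
  have hmask : ∀ j, B i j * (v - fun j => if j ∈ I then v j else 0) j =
      if j ∈ Iᶜ then B i j * v j else 0 := fun j => by
    by_cases hj : j ∈ I <;> simp [hj]
  simp only [mulVec, dotProduct, hmask, Finset.sum_ite_mem, Finset.univ_inter]
  exact (Finset.sum_subtype Iᶜ (p := (· ∉ I)) (by simp) (fun j => B i j * v j)).symm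

lemma eNormC_ite_mem (v : Fin n → ℂ) (I : Finset (Fin n)) :
    eNormC (fun j => if j ∈ I then v j else 0) = eNormSub v I := by
  simp only [eNormC, eNormSub, apply_ite (‖·‖ ^ 2), norm_zero, ne_eq, OfNat.ofNat_ne_zero,
    not_false_eq_true, zero_pow, Finset.sum_ite_mem, Finset.univ_inter]

lemma eNormC_subtype_sq_add_eNormSub_sq (v : Fin n → ℂ) (I : Finset (Fin n)) :
    eNormC (fun j : {j // j ∉ I} => v j) ^ 2 + eNormSub v I ^ 2 = eNormC v ^ 2 := by
  simp only [eNormC, eNormSub]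
  rw [Real.sq_sqrt (by positivity), Real.sq_sqrt (by positivity), Real.sq_sqrt (by positivity),
    ← Finset.sum_subtype Iᶜ (p := (· ∉ I)) (by simp) (fun j => ‖v j‖ ^ 2), add_comm,
    Finset.sum_add_sum_compl]

end Columns

section Eigenvectors

variable {n : ℕ} {A : Matrix (Fin n) (Fin n) ℂ} {R : ℝ} {v : Fin n → ℂ} {lam : ℂ}

lemma norm_le_of_mulVec_eq_smul (hA : ∀ x, eNormC (A *ᵥ x) ≤ R * eNormC x) (hv : eNormC v = 1)
    (hAv : A *ᵥ v = lam • v) : ‖lam‖ ≤ R := by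
  simpa [hAv, eNormC_smul, hv] using hA v

lemma sMin_colsOutside_mul_le (hA : ∀ x, eNormC (A *ᵥ x) ≤ R * eNormC x) (hv : eNormC v = 1)
    (hAv : A *ᵥ v = lam • v) {lam₀ : ℂ} (hlam₀ : ‖lam₀‖ ≤ R) (I : Finset (Fin n)) :
    sMin (colsOutside (A - lam₀ • 1) I) * eNormC (fun j : {j // j ∉ I} => v j) ≤
      ‖lam - lam₀‖ + 2 * R * eNormSub v I := by
  set B := A - lam₀ • (1 : Matrix (Fin n) (Fin n) ℂ)
  set w : Fin n → ℂ := fun j => if j ∈ I then v j else 0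
  have hBv : eNormC (B *ᵥ v) = ‖lam - lam₀‖ := by
    rw [sub_mulVec, hAv, smul_mulVec, one_mulVec, ← sub_smul, eNormC_smul, hv, mul_one]
  have hBw : eNormC (B *ᵥ w) ≤ 2 * R * eNormSub v I := by
    rw [sub_mulVec, smul_mulVec, one_mulVec, ← eNormC_ite_mem]
    calc eNormC (A *ᵥ w - lam₀ • w) ≤ R * eNormC w + ‖lam₀‖ * eNormC w :=
          (eNormC_sub_le _ _).trans (add_le_add (hA w) (eNormC_smul lam₀ w).le)
      _ ≤ 2 * R * eNormC w := by nlinarith [eNormC_nonneg w]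
  calc _ ≤ eNormC (colsOutside B I *ᵥ fun j : {j // j ∉ I} => v j) := sMin_mul_eNormC_le _ _
    _ ≤ eNormC (B *ᵥ v) + eNormC (B *ᵥ w) := by
        rw [colsOutside_mulVec]; exact eNormC_sub_le _ _
    _ ≤ _ := by rw [hBv]; gcongr

lemma sMin_colsOutside_le (hA : ∀ x, eNormC (A *ᵥ x) ≤ R * eNormC x) (hv : eNormC v = 1)
    (hAv : A *ᵥ v = lam • v) {lam₀ : ℂ} (hlam₀ : ‖lam₀‖ ≤ R) {δ : ℝ} (hδ : δ < 1 / 2)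
    (hnear : ‖lam - lam₀‖ ≤ 3 * √2 * δ * R) {I : Finset (Fin n)} (hvI : eNormSub v I < δ) :
    sMin (colsOutside (A - lam₀ • 1) I) ≤ 8 * δ * R := by
  have hR : 0 ≤ R := (norm_nonneg _).trans hlam₀
  have hsplit := eNormC_subtype_sq_add_eNormSub_sq v I
  rw [hv] at hsplit
  have hvI0 : 0 ≤ eNormSub v I := Real.sqrt_nonneg _
  have hδ0 : 0 < δ := hvI0.trans_lt hvI
  have hu : 17 / 20 ≤ eNormC (fun j : {j // j ∉ I} => v j) := by
    nlinarith [eNormC_nonneg (fun j : {j // j ∉ I} => v j)]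
  have hmul := sMin_colsOutside_mul_le hA hv hAv hlam₀ I
  -- `(3 · 3/2 + 2) / (17/20) < 8`, using `√2 < 3/2`
  have hsqrt := Real.sqrt_two_lt_three_halves
  have hs := sMin_nonneg (colsOutside (A - lam₀ • 1) I)
  nlinarith [mul_nonneg hδ0.le hR]

end Eigenvectors

open Metric in
lemma Metric.IsCover.exists_finset_subset_isCover_two_mul {X : Type*} [PseudoEMetricSpace X]
    {r : NNReal} {S : Set X} {G : Finset X} (hG : IsCover r S G) :
    ∃ N : Finset X, ↑N ⊆ S ∧ N.card ≤ G.card ∧ IsCover (2 * r) S N := by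
  have hcard := (coveringNumber_two_mul_le_externalCoveringNumber r S).trans
    hG.externalCoveringNumber_le_encard
  obtain ⟨C, hCS, hCfin, hC, hCcard⟩ := exists_set_encard_eq_coveringNumber
    (hcard.trans_lt G.finite_toSet.encard_lt_top).ne
  refine ⟨hCfin.toFinset, by simpa using hCS, ?_, by simpa using hC⟩
  rw [← hCcard, hCfin.encard_eq_coe_toFinset_card] at hcard
  exact_mod_cast hcard

lemma exists_int_abs_le_abs_sub_mul_le {s : ℝ} (hs : 0 < s) {m : ℕ} {x : ℝ} (hx : |x| ≤ m * s) :
    ∃ a : ℤ, |a| ≤ m ∧ |x - a * s| ≤ s / 2 := by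
  have hxs : |x / s| ≤ m := by rwa [abs_div, abs_of_pos hs, div_le_iff₀ hs]
  obtain ⟨hlo, hhi⟩ := abs_le.1 hxs
  refine ⟨round (x / s), abs_le.2 ⟨?_, ?_⟩, ?_⟩
  · rw [round_eq, Int.le_floor]; push_cast; linarith
  · rw [round_eq, Int.floor_le_iff]; push_cast; linarith
  · calc |x - round (x / s) * s| = |x / s - round (x / s)| * s := by
          rw [← abs_of_pos hs, ← abs_mul, abs_of_pos hs, sub_mul, div_mul_cancel₀ _ hs.ne']
      _ ≤ 1 / 2 * s := by gcongr; exact abs_sub_round _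
      _ = s / 2 := by ring

noncomputable def complexGrid (m : ℕ) (s : ℝ) : Finset ℂ :=
  (Finset.Icc (-(m : ℤ)) m ×ˢ Finset.Icc (-(m : ℤ)) m).image fun p => ⟨p.1 * s, p.2 * s⟩

lemma card_complexGrid_le (m : ℕ) (s : ℝ) : (complexGrid m s).card ≤ (2 * m + 1) ^ 2 := by
  refine Finset.card_image_le.trans_eq ?_
  rw [Finset.card_product, Int.card_Icc, sq]
  congr 2 <;> omega

lemma exists_mem_complexGrid_norm_sub_le {s : ℝ} (hs : 0 < s) {m : ℕ} {z : ℂ}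
    (hz : ‖z‖ ≤ m * s) : ∃ g ∈ complexGrid m s, ‖z - g‖ ≤ √2 * (s / 2) := by
  obtain ⟨a, ha, hza⟩ := exists_int_abs_le_abs_sub_mul_le hs ((z.abs_re_le_norm).trans hz)
  obtain ⟨b, hb, hzb⟩ := exists_int_abs_le_abs_sub_mul_le hs ((z.abs_im_le_norm).trans hz)
  refine ⟨⟨a * s, b * s⟩, Finset.mem_image.2 ⟨(a, b), ?_, rfl⟩, ?_⟩
  · simp only [Finset.mem_product, Finset.mem_Icc]
    exact ⟨abs_le.1 ha, abs_le.1 hb⟩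
  · refine (Complex.norm_le_sqrt_two_mul_max _).trans ?_
    gcongr
    exact max_le hza hzb

open Metric in
lemma exists_finset_net_closedBall {R δ : ℝ} (hR : 0 < R) (hδ : 0 < δ) (hδ' : δ < 1 / 2) :
    ∃ N : Finset ℂ, (∀ z ∈ N, ‖z‖ ≤ R) ∧ (N.card : ℝ) ≤ 5 / δ ^ 2 ∧
      ∀ z : ℂ, ‖z‖ ≤ R → ∃ w ∈ N, ‖z - w‖ ≤ 3 * √2 * δ * R := by
  set m := ⌈1 / (3 * δ)⌉₊
  have hm : 1 ≤ 3 * δ * m := by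
    have := Nat.le_ceil (1 / (3 * δ))
    rwa [div_le_iff₀' (by positivity)] at this
  have hm' : m * δ < 1 / 3 + δ := by
    have := Nat.ceil_lt_add_one (one_div_nonneg.2 (by positivity : 0 ≤ 3 * δ))
    rw [div_add_one (by positivity), lt_div_iff₀ (by positivity)] at this
    linarith
  have hm0 : (0 : ℝ) < m := by nlinarith
  set s := R / m
  have hs : 0 < s := by positivity
  have hG : IsCover (√2 * (s / 2)).toNNReal (closedBall (0 : ℂ) R) ↑(complexGrid m s) := by
    refine isCover_iff_subset_iUnion_closedBall.2 fun z hz => ?_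
    rw [mem_closedBall_zero_iff] at hz
    obtain ⟨g, hg, hzg⟩ := exists_mem_complexGrid_norm_sub_le hs
      (hz.trans (by rw [mul_div_cancel₀ R hm0.ne']))
    refine Set.mem_iUnion₂.2 ⟨g, hg, ?_⟩
    rw [mem_closedBall, dist_eq_norm, Real.coe_toNNReal _ (by positivity)]
    exact hzg
  obtain ⟨N, hNR, hNcard, hN⟩ := hG.exists_finset_subset_isCover_two_mul
  refine ⟨N, fun z hz => mem_closedBall_zero_iff.1 (hNR hz), ?_, fun z hz => ?_⟩
  · calc (N.card : ℝ) ≤ (2 * m + 1) ^ 2 := by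
          exact_mod_cast hNcard.trans (card_complexGrid_le m s)
      _ ≤ 5 / δ ^ 2 := by rw [le_div_iff₀ (by positivity)]; nlinarith
  · obtain ⟨w, hw, hzw⟩ := Set.mem_iUnion₂.1
      (isCover_iff_subset_iUnion_closedBall.1 hN (mem_closedBall_zero_iff.2 hz))
    refine ⟨w, hw, ?_⟩
    rw [mem_closedBall, dist_eq_norm, NNReal.coe_mul, NNReal.coe_ofNat,
      Real.coe_toNNReal _ (by positivity)] at hzw
    have hsR : s ≤ 3 * δ * R := by
      rw [div_le_iff₀ hm0]; nlinarith
    nlinarith [Real.sqrt_nonneg 2]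

lemma Nat.choose_le_exp_one_mul_div_pow (n : ℕ) {k : ℕ} (hk : 0 < k) :
    (n.choose k : ℝ) ≤ (Real.exp 1 * n / k) ^ k := by
  have hk' : (0 : ℝ) < k := by exact_mod_cast hk
  calc (n.choose k : ℝ) ≤ n ^ k / k.factorial := Nat.choose_le_pow_div k n
    _ = (n / k : ℝ) ^ k * ((k : ℝ) ^ k / k.factorial) := by
        rw [div_pow, div_mul_div_cancel₀ (by positivity)]
    _ ≤ (n / k : ℝ) ^ k * Real.exp 1 ^ k := by
        gcongr
        rw [Real.exp_one_pow]
        exact Real.pow_div_factorial_le_exp _ hk'.le k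
    _ = (Real.exp 1 * n / k) ^ k := by rw [← mul_pow, mul_div_assoc, mul_comm]

lemma exists_mem_sMin_colsOutside_le {n : ℕ} {A : Matrix (Fin n) (Fin n) ℂ} {R δ : ℝ}
    {N : Finset ℂ} (hNR : ∀ z ∈ N, ‖z‖ ≤ R)
    (hN : ∀ z : ℂ, ‖z‖ ≤ R → ∃ w ∈ N, ‖z - w‖ ≤ 3 * √2 * δ * R) (hδ : δ < 1 / 2)
    (hA : ∀ x, eNormC (A *ᵥ x) ≤ R * eNormC x) {v : Fin n → ℂ} {lam : ℂ} (hv : eNormC v = 1)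
    (hAv : A *ᵥ v = lam • v) {I : Finset (Fin n)} (hvI : eNormSub v I < δ) :
    ∃ lam₀ ∈ N, sMin (colsOutside (A - lam₀ • 1) I) ≤ 8 * δ * R := by
  obtain ⟨lam₀, hlam₀, hnear⟩ := hN lam (norm_le_of_mulVec_eq_smul hA hv hAv)
  exact ⟨lam₀, hlam₀, sMin_colsOutside_le hA hv hAv (hNR lam₀ hlam₀) hδ hnear hvI⟩

lemma card_powersetCard_univ_le {n k : ℕ} (hk : 0 < k) {ε : ℝ} (hkε : (k : ℝ) = ε * n) :
    ((Finset.powersetCard k (Finset.univ : Finset (Fin n))).card : ℝ) ≤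
      (Real.exp 1 / ε) ^ (ε * n) := by
  have hn : (n : ℝ) ≠ 0 := by
    rintro hn
    rw [hn, mul_zero, Nat.cast_eq_zero] at hkε
    omega
  rw [Finset.card_powersetCard, Finset.card_univ, Fintype.card_fin, ← hkε, Real.rpow_natCast,
    eq_div_of_mul_eq hn hkε.symm, div_div_eq_mul_div]
  exact Nat.choose_le_exp_one_mul_div_pow n hk

lemma MeasureTheory.measureReal_biUnion_finset_le_card_mul {α β : Type*} [MeasurableSpace α]
    {μ : Measure α} (s : Finset β) (f : β → Set α) {p : ℝ} (h : ∀ b ∈ s, μ.real (f b) ≤ p) :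
    μ.real (⋃ b ∈ s, f b) ≤ s.card * p :=
  (measureReal_biUnion_finset_le s f).trans (by simpa using Finset.sum_le_card_nsmul s _ p h)

theorem reduction_delocalization_to_invertibility_general
    (n : ℕ) (Ω : Type) [MeasureSpace Ω] [IsProbabilityMeasure (ℙ : Measure Ω)]
    (A : Ω → Matrix (Fin n) (Fin n) ℂ)
    (M ε p₀ δ : ℝ) (hM : 1 ≤ M)
    (hp₀ : 0 < p₀)
    (hδ : 0 < δ) (hδ' : δ < 1 / 2)
    -- `ε n` is a positive integer
    (hεn : ∃ k : ℕ, 0 < k ∧ (k : ℝ) = ε * n)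
    -- invertibility assumption for every fixed `λ₀` and every fixed `I`
    (hinv : ∀ lam₀ : ℂ, ‖lam₀‖ ≤ M * Real.sqrt n →
      ∀ I : Finset (Fin n), (I.card : ℝ) = ε * n →
        (ℙ ({ω | sMin (colsOutside (A ω - lam₀ • (1 : Matrix (Fin n) (Fin n) ℂ)) I) ≤
              8 * δ * M * Real.sqrt n} ∩
            {ω | ∀ x : Fin n → ℂ,
              eNormC (A ω *ᵥ x) ≤ M * Real.sqrt n * eNormC x})).toReal ≤ p₀) :
    -- conclusion: the localization event together with the boundedness event is unlikely
    (ℙ ({ω | ∃ (v : Fin n → ℂ) (lam : ℂ), eNormC v = 1 ∧ A ω *ᵥ v = lam • v ∧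
          ∃ I : Finset (Fin n), (I.card : ℝ) = ε * n ∧ eNormSub v I < δ} ∩
        {ω | ∀ x : Fin n → ℂ,
          eNormC (A ω *ᵥ x) ≤ M * Real.sqrt n * eNormC x})).toReal ≤
      5 / δ ^ 2 * (Real.exp 1 / ε) ^ (ε * n) * p₀ := by
  obtain ⟨k, hk, hkε⟩ := hεn
  have hn : 0 < n := Nat.pos_of_ne_zero fun h => by simp [h] at hkε; omega
  obtain ⟨N, hNR, hNcard, hN⟩ := exists_finset_net_closedBall
    (mul_pos (by linarith : 0 < M) (Real.sqrt_pos.2 (Nat.cast_pos.2 hn))) hδ hδ'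
  set subsets := Finset.powersetCard k (Finset.univ : Finset (Fin n))
  set E : ℂ × Finset (Fin n) → Set Ω := fun p =>
    {ω | sMin (colsOutside (A ω - p.1 • 1) p.2) ≤ 8 * δ * M * √n} ∩
      {ω | ∀ x, eNormC (A ω *ᵥ x) ≤ M * √n * eNormC x}
  calc (ℙ _).toReal ≤ (ℙ (⋃ p ∈ N ×ˢ subsets, E p)).toReal := by
        refine measureReal_mono ?_ (measure_ne_top _ _)
        rintro ω ⟨⟨v, lam, hv, hAv, I, hI, hvI⟩, hA⟩
        obtain ⟨lam₀, hlam₀, hsMin⟩ := exists_mem_sMin_colsOutside_le hNR hN hδ' hA hv hAv hvI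
        have hIk : I ∈ subsets :=
          Finset.mem_powersetCard.2 ⟨I.subset_univ, by exact_mod_cast hI.trans hkε.symm⟩
        exact Set.mem_iUnion₂.2 ⟨(lam₀, I), Finset.mem_product.2 ⟨hlam₀, hIk⟩,
          hsMin.trans_eq (by ring), hA⟩
    _ ≤ (N ×ˢ subsets).card * p₀ := measureReal_biUnion_finset_le_card_mul _ _ fun p hp =>
        hinv p.1 (hNR p.1 (Finset.mem_product.1 hp).1) p.2 <| by
          rw [(Finset.mem_powersetCard.1 (Finset.mem_product.1 hp).2).2, hkε]
    _ ≤ 5 / δ ^ 2 * (Real.exp 1 / ε) ^ (ε * n) * p₀ := by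
        rw [Finset.card_product, Nat.cast_mul]
        gcongr
        exact card_powersetCard_univ_le hk hkε

/-- Reduction of no-gaps delocalization to invertibility of submatrices
(Proposition "Reduction of delocalization to invertibility"). -/
theorem reduction_delocalization_to_invertibility
    (n : ℕ) (Ω : Type) [MeasureSpace Ω] [IsProbabilityMeasure (ℙ : Measure Ω)]
    (A : Ω → Matrix (Fin n) (Fin n) ℂ)
    (M ε p₀ δ : ℝ) (hM : 1 ≤ M)
    (hε : 0 < ε) (hε' : ε < 1 / 2) (hp₀ : 0 < p₀) (hp₀' : p₀ < 1 / 2)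
    (hδ : 0 < δ) (hδ' : δ < 1 / 2)
    -- `ε n` is a positive integer
    (hεn : ∃ k : ℕ, 0 < k ∧ (k : ℝ) = ε * n)
    -- invertibility assumption for every fixed `λ₀` and every fixed `I`
    (hinv : ∀ lam₀ : ℂ, ‖lam₀‖ ≤ M * Real.sqrt n →
      ∀ I : Finset (Fin n), (I.card : ℝ) = ε * n →
        (ℙ ({ω | sMin (colsOutside (A ω - lam₀ • (1 : Matrix (Fin n) (Fin n) ℂ)) I) ≤
              8 * δ * M * Real.sqrt n} ∩
            {ω | ∀ x : Fin n → ℂ,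
              eNormC (A ω *ᵥ x) ≤ M * Real.sqrt n * eNormC x})).toReal ≤ p₀) :
    -- conclusion: the localization event together with the boundedness event is unlikely
    (ℙ ({ω | ∃ (v : Fin n → ℂ) (lam : ℂ), eNormC v = 1 ∧ A ω *ᵥ v = lam • v ∧
          ∃ I : Finset (Fin n), (I.card : ℝ) = ε * n ∧ eNormSub v I < δ} ∩
        {ω | ∀ x : Fin n → ℂ,
          eNormC (A ω *ᵥ x) ≤ M * Real.sqrt n * eNormC x})).toReal ≤
      5 / δ ^ 2 * (Real.exp 1 / ε) ^ (ε * n) * p₀ :=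
  reduction_delocalization_to_invertibility_general n Ω A M ε p₀ δ hM hp₀ hδ hδ' hεn hinv
end

section
/- There is an absolute constant C₀ with the following property. Let X = (X₁,…,Xₙ) have independent real coordinates with densities bounded by 1 almost everywhere, and let P be the orthogonal projection in ℝⁿ onto a d-dimensional subspace with ‖P e₁‖₂ ≥ 1/2. Let Q be the orthogonal projection in ℝⁿ whose kernel is the span of ker(P) and the vector P e₁ (so Q has rank d − 1). Let M ≥ C₀. If P( ‖QX‖₂ ≤ t√(d−1) ) ≤ (Mt)^{d−1} for all t ≥ 0, then P( ‖PX‖₂ ≤ t√d ) ≤ (Mt)^d for all t ≥ 0. -/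
/-! Write `x = (a, y)` with `a = x₁`. With `w = P e₁` and `σ = ‖w‖² ≥ 1/4` one has
`P = Q + w wᵀ / σ` and `Q e₁ = 0`, so `‖P x‖² = ‖Q x‖² + σ (a - c y)²` where `‖Q x‖` depends on `y`
only. For fixed `y` the admissible values of `a` form an interval of length at most
`4 √(t² d - ‖Q x‖²)`; as `X₁` has density at most `1` and is independent of the other coordinates,
`ℙ(‖P X‖ ≤ t √d) ≤ 4 𝔼 √(t² d - ‖Q X‖²)₊`. By the small-ball hypothesis for `Q X`, the tail
`ℙ(√(t² d - ‖Q X‖²) > r) ≤ (M √((t² d - r²) / (d - 1)))^(d - 1)` is dominated by the Gaussian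
`2 (M t)^(d - 1) exp(-(d - 1) r² / (2 t² d))`, and the layer-cake formula gives
`𝔼 √(t² d - ‖Q X‖²)₊ ≤ 4 t (M t)^(d - 1)`. Hence the bound `16 t (M t)^(d - 1) ≤ (M t)^d`. -/

open MeasureTheory ProbabilityTheory Matrix

noncomputable def eNormR {ι : Type*} [Fintype ι] (v : ι → ℝ) : ℝ :=
  Real.sqrt (∑ i, (v i) ^ 2)

theorem Real.sqrt_sub_le_sqrt_mul_exp {R : ℝ} (hR : 0 < R) (x : ℝ) :
    √(R - x) ≤ √R * Real.exp (-(x / (2 * R))) := by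
  have h : R - x ≤ R * Real.exp (-(x / R)) := by
    have := mul_le_mul_of_nonneg_left (Real.add_one_le_exp (-(x / R))) hR.le
    rwa [mul_add, mul_neg, mul_div_cancel₀ _ hR.ne', mul_one, ← sub_eq_neg_add] at this
  calc √(R - x) ≤ √(R * Real.exp (-(x / R))) := Real.sqrt_le_sqrt h
    _ = √R * Real.exp (-(x / (2 * R))) := by
      rw [Real.sqrt_mul hR.le, ← Real.exp_half]
      ring_nf

theorem Real.sqrt_one_add_inv_pow_le_two (k : ℕ) : √(1 + (k : ℝ)⁻¹) ^ k ≤ 2 := by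
  have h : (√(1 + (k : ℝ)⁻¹) ^ k) ^ 2 ≤ 2 ^ 2 := by
    rw [← pow_mul, mul_comm, pow_mul, Real.sq_sqrt (by positivity)]
    exact Real.one_add_inv_pow_le_exp.trans (Real.exp_one_lt_d9.le.trans (by norm_num))
  exact (pow_le_pow_iff_left₀ (by positivity) (by norm_num) two_ne_zero).mp h

theorem pow_sqrt_sub_sq_div_le {k : ℕ} (hk : k ≠ 0) {t : ℝ} (ht : 0 < t) (r : ℝ) :
    √((t ^ 2 * (k + 1) - r ^ 2) / k) ^ k ≤
      2 * t ^ k * Real.exp (-(k / (2 * (t ^ 2 * (k + 1)))) * r ^ 2) := by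
  have hk' : (0 : ℝ) < k := Nat.cast_pos.mpr (Nat.pos_of_ne_zero hk)
  have hR : 0 < t ^ 2 * (k + 1) := by positivity
  have hsqrt : √(t ^ 2 * (k + 1)) / √k = t * √(1 + (k : ℝ)⁻¹) := by
    rw [← Real.sqrt_div' _ hk'.le,
      show t ^ 2 * (k + 1) / k = t ^ 2 * (1 + (k : ℝ)⁻¹) by field_simp,
      Real.sqrt_mul (sq_nonneg t), Real.sqrt_sq ht.le]
  calc √((t ^ 2 * (k + 1) - r ^ 2) / k) ^ k
      ≤ (t * √(1 + (k : ℝ)⁻¹) * Real.exp (-(r ^ 2 / (2 * (t ^ 2 * (k + 1)))))) ^ k := by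
        gcongr
        rw [Real.sqrt_div' _ hk'.le, ← hsqrt, div_mul_eq_mul_div]
        gcongr
        exact Real.sqrt_sub_le_sqrt_mul_exp hR _
    _ = t ^ k * √(1 + (k : ℝ)⁻¹) ^ k *
          Real.exp (-(k / (2 * (t ^ 2 * (k + 1)))) * r ^ 2) := by
        rw [mul_pow, mul_pow, ← Real.exp_nat_mul]
        congr 2
        field_simp
    _ ≤ 2 * t ^ k * Real.exp (-(k / (2 * (t ^ 2 * (k + 1)))) * r ^ 2) := by
        gcongr ?_ * _
        rw [mul_comm 2]
        gcongr
        exact Real.sqrt_one_add_inv_pow_le_two k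

theorem volume_setOf_mul_sq_sub_le {σ : ℝ} (hσ : 0 < σ) (b D : ℝ) :
    volume {a : ℝ | σ * (a - b) ^ 2 ≤ D} ≤ ENNReal.ofReal (2 * √(D / σ)) := by
  rw [← Real.volume_closedBall b]
  refine measure_mono fun a ha => ?_
  rw [Metric.mem_closedBall, Real.dist_eq, ← Real.sqrt_sq_eq_abs]
  exact Real.sqrt_le_sqrt ((le_div_iff₀' hσ).mpr ha)

namespace Matrix

open LinearMap Submodule

variable {ι : Type*} [Fintype ι] {P Q : Matrix ι ι ℝ}

theorem mulVec_dotProduct_of_transpose_eq (hP : Pᵀ = P) (u v : ι → ℝ) :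
    (P *ᵥ u) ⬝ᵥ v = u ⬝ᵥ (P *ᵥ v) := by
  conv_lhs => rw [← hP, mulVec_transpose]
  exact (dotProduct_mulVec u P v).symm

theorem mulVec_dotProduct_mulVec_self (hPt : Pᵀ = P) (hPP : P * P = P) (x : ι → ℝ) :
    (P *ᵥ x) ⬝ᵥ (P *ᵥ x) = x ⬝ᵥ (P *ᵥ x) := by
  rw [mulVec_dotProduct_of_transpose_eq hPt, mulVec_mulVec, hPP]

theorem mul_eq_of_ker_le (hPP : P * P = P) (h : ker P.mulVecLin ≤ ker Q.mulVecLin) :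
    Q * P = Q := by
  refine ext_iff_mulVec.mpr fun x => ?_
  have hx : x - P *ᵥ x ∈ ker P.mulVecLin := by simp [mulVec_sub, mulVec_mulVec, hPP]
  have := h hx
  rw [mem_ker, mulVecLin_apply, mulVec_sub, sub_eq_zero] at this
  rw [← mulVec_mulVec, this]

theorem exists_mulVec_eq_add_smul (hPt : Pᵀ = P) (hPP : P * P = P) (hQt : Qᵀ = Q)
    (hQQ : Q * Q = Q) {w : ι → ℝ} (hw : P *ᵥ w = w)
    (hker : ker Q.mulVecLin = ker P.mulVecLin ⊔ span ℝ {w}) (x : ι → ℝ) :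
    ∃ a : ℝ, P *ᵥ x = Q *ᵥ x + a • w := by
  have hQP : Q * P = Q := mul_eq_of_ker_le hPP (hker ▸ le_sup_left)
  have hPQ : P * Q = Q := by simpa [hPt, hQt] using congrArg transpose hQP
  have hx : x - Q *ᵥ x ∈ ker Q.mulVecLin := by simp [mulVec_sub, mulVec_mulVec, hQQ]
  rw [hker, mem_sup] at hx
  obtain ⟨k, hk, _, hz, hkz⟩ := hx
  obtain ⟨a, rfl⟩ := mem_span_singleton.mp hz
  refine ⟨a, ?_⟩
  have := congrArg (P *ᵥ ·) hkz
  simp only [mulVec_sub, mulVec_add, mulVec_smul, mulVec_mulVec, hPQ, hw,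
    show P *ᵥ k = 0 from hk, zero_add] at this
  rw [this, add_sub_cancel]

theorem mulVec_dotProduct_mulVec_self_eq_add (hPt : Pᵀ = P) (hPP : P * P = P) (hQt : Qᵀ = Q)
    (hQQ : Q * Q = Q) {w : ι → ℝ} (hw : P *ᵥ w = w)
    (hker : ker Q.mulVecLin = ker P.mulVecLin ⊔ span ℝ {w}) (hww : w ⬝ᵥ w ≠ 0) (x : ι → ℝ) :
    (P *ᵥ x) ⬝ᵥ (P *ᵥ x) = (Q *ᵥ x) ⬝ᵥ (Q *ᵥ x) + (w ⬝ᵥ x) ^ 2 / (w ⬝ᵥ w) := by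
  obtain ⟨a, ha⟩ := exists_mulVec_eq_add_smul hPt hPP hQt hQQ hw hker x
  have hQw : Q *ᵥ w = 0 := (hker ▸ mem_sup_right (mem_span_singleton_self w) :
    w ∈ ker Q.mulVecLin)
  have hcoef : a * (w ⬝ᵥ w) = w ⬝ᵥ x := by
    have := congrArg (w ⬝ᵥ ·) ha
    simp only [dotProduct_add, dotProduct_smul, smul_eq_mul] at this
    rwa [← mulVec_dotProduct_of_transpose_eq hPt, hw, ← mulVec_dotProduct_of_transpose_eq hQt,
      hQw, zero_dotProduct, zero_add, eq_comm] at this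
  rw [mulVec_dotProduct_mulVec_self hPt hPP, mulVec_dotProduct_mulVec_self hQt hQQ, ha,
    dotProduct_add, dotProduct_smul, smul_eq_mul, dotProduct_comm x w, ← hcoef, mul_pow, sq (w ⬝ᵥ w), mul_div_assoc, mul_div_cancel_right₀ _ hww, sq, mul_assoc]

end Matrix

theorem eNormR_eq_sqrt_dotProduct {ι : Type*} [Fintype ι] (v : ι → ℝ) :
    eNormR v = √(v ⬝ᵥ v) := by
  simp [eNormR, dotProduct, sq]

theorem eNormR_le_mul_sqrt_iff {ι : Type*} [Fintype ι] (v : ι → ℝ) {t s : ℝ} (ht : 0 ≤ t)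
    (hs : 0 ≤ s) : eNormR v ≤ t * √s ↔ v ⬝ᵥ v ≤ t ^ 2 * s := by
  rw [eNormR_eq_sqrt_dotProduct, ← Real.sqrt_sq ht, ← Real.sqrt_mul (sq_nonneg _),
    Real.sqrt_le_sqrt_iff (by positivity), Real.sqrt_sq ht]

open LinearMap Submodule in
theorem exists_dotProduct_mulVec_cons_eq {m : ℕ} {P Q : Matrix (Fin (m + 1)) (Fin (m + 1)) ℝ}
    (hPt : Pᵀ = P) (hPP : P * P = P) (hQt : Qᵀ = Q) (hQQ : Q * Q = Q)
    (hker : ker Q.mulVecLin = ker P.mulVecLin ⊔ span ℝ {P *ᵥ Pi.single 0 1})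
    (hPe : 1 / 2 ≤ eNormR (P *ᵥ Pi.single 0 1)) :
    ∃ σ : ℝ, ∃ c : (Fin m → ℝ) → ℝ, 1 / 4 ≤ σ ∧ Continuous c ∧ ∀ a y,
      Q *ᵥ Fin.cons a y = Q *ᵥ Fin.cons 0 y ∧
      (P *ᵥ Fin.cons a y) ⬝ᵥ (P *ᵥ Fin.cons a y) =
        (Q *ᵥ Fin.cons 0 y) ⬝ᵥ (Q *ᵥ Fin.cons 0 y) + σ * (a - c y) ^ 2 := by
  set w := P *ᵥ Pi.single 0 1
  have hPw : P *ᵥ w = w := by rw [mulVec_mulVec, hPP]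
  have hσ : 1 / 4 ≤ w ⬝ᵥ w := by
    rw [eNormR_eq_sqrt_dotProduct, Real.le_sqrt' (by norm_num)] at hPe
    linarith
  have hw0 : w 0 = w ⬝ᵥ w := by
    rw [mulVec_dotProduct_mulVec_self hPt hPP, single_dotProduct, one_mul]
  have hQe : Q *ᵥ Pi.single 0 1 = 0 := by
    have hker_le : Pi.single 0 1 - w ∈ ker Q.mulVecLin :=
      hker ▸ mem_sup_left (by rw [mem_ker, mulVecLin_apply, mulVec_sub, hPw, sub_self])
    have hQw : w ∈ ker Q.mulVecLin := hker ▸ mem_sup_right (mem_span_singleton_self w)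
    simpa [mulVec_sub, sub_eq_zero, show Q *ᵥ w = 0 from hQw] using hker_le
  refine ⟨w ⬝ᵥ w, fun y => -(∑ j, w j.succ * y j) / (w ⬝ᵥ w), hσ, by fun_prop, fun a y => ?_⟩
  have hQ : Q *ᵥ Fin.cons a y = Q *ᵥ Fin.cons 0 y := by
    have : (Fin.cons a y : Fin (m + 1) → ℝ) = Fin.cons 0 y + a • Pi.single 0 1 := by
      ext i; cases i using Fin.cases <;> simp
    rw [this, mulVec_add, mulVec_smul, hQe, smul_zero, add_zero]
  refine ⟨hQ, ?_⟩
  have hwx : w ⬝ᵥ Fin.cons a y = (w ⬝ᵥ w) * a + ∑ j, w j.succ * y j := by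
    rw [dotProduct, Fin.sum_univ_succ, hw0]
    simp
  rw [mulVec_dotProduct_mulVec_self_eq_add hPt hPP hQt hQQ hPw hker (by linarith), hQ, hwx]
  field_simp
  ring

theorem lintegral_ofReal_le_of_meas_lt_le_gaussian {α : Type*} [MeasurableSpace α]
    {ν : Measure α} {f : α → ℝ} (hf0 : 0 ≤ᵐ[ν] f) (hf : AEMeasurable f ν) {C b : ℝ}
    (hC : 0 ≤ C) (hb : 0 < b)
    (htail : ∀ r > 0, ν {x | r < f x} ≤ ENNReal.ofReal (C * Real.exp (-b * r ^ 2))) :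
    ∫⁻ x, ENNReal.ofReal (f x) ∂ν ≤ ENNReal.ofReal (C * (√(Real.pi / b) / 2)) := by
  rw [lintegral_eq_lintegral_meas_lt ν hf0 hf]
  calc ∫⁻ r in Set.Ioi 0, ν {x | r < f x}
      ≤ ∫⁻ r in Set.Ioi 0, ENNReal.ofReal (C * Real.exp (-b * r ^ 2)) :=
        setLIntegral_mono' measurableSet_Ioi htail
    _ = ENNReal.ofReal (∫ r in Set.Ioi 0, C * Real.exp (-b * r ^ 2)) :=
        (ofReal_integral_eq_lintegral_ofReal
          ((integrableOn_Ioi_exp_neg_mul_sq_iff.mpr hb).const_mul C)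
          (ae_of_all _ fun r => by positivity)).symm
    _ = ENNReal.ofReal (C * (√(Real.pi / b) / 2)) := by
        rw [integral_const_mul, integral_gaussian_Ioi]

theorem Real.sqrt_pi_div_le {k : ℕ} (hk : k ≠ 0) {t : ℝ} (ht : 0 ≤ t) :
    √(Real.pi / (k / (2 * (t ^ 2 * (k + 1))))) ≤ 4 * t := by
  have hk1 : (1 : ℝ) ≤ k := Nat.one_le_cast.mpr (Nat.pos_of_ne_zero hk)
  rw [← Real.sqrt_sq (by positivity : 0 ≤ 4 * t)]
  refine Real.sqrt_le_sqrt ?_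
  rw [div_div_eq_mul_div, div_le_iff₀ (by positivity)]
  have hπ : Real.pi * (2 * (t ^ 2 * (k + 1))) ≤ 4 * (2 * (t ^ 2 * (k + 1))) := by
    gcongr
    exact Real.pi_le_four
  nlinarith [mul_nonneg (sq_nonneg t) (sub_nonneg.mpr hk1)]

theorem measure_lt_sqrt_sub_le {Y : Type*} [MeasurableSpace Y] {ν : Measure Y} {ζ : Y → ℝ}
    {k : ℕ} (hk : k ≠ 0) {M : ℝ} (hM : 0 ≤ M)
    (hsmall : ∀ u, 0 ≤ u → ν {y | √(ζ y) ≤ u * √k} ≤ ENNReal.ofReal ((M * u) ^ k))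
    {t : ℝ} (ht : 0 < t) {r : ℝ} (hr : 0 < r) :
    ν {y | r < √(t ^ 2 * (k + 1) - ζ y)} ≤
      ENNReal.ofReal (2 * (M * t) ^ k * Real.exp (-(k / (2 * (t ^ 2 * (k + 1)))) * r ^ 2)) := by
  have hk' : (0 : ℝ) < k := Nat.cast_pos.mpr (Nat.pos_of_ne_zero hk)
  set R := t ^ 2 * (k + 1)
  have hsub : {y | r < √(R - ζ y)} ⊆ {y | √(ζ y) ≤ √((R - r ^ 2) / k) * √k} := by
    intro y hy
    rw [Set.mem_ofPred_eq, ← Real.sqrt_mul' _ hk'.le, div_mul_cancel₀ _ hk'.ne']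
    exact Real.sqrt_le_sqrt (by linarith [(Real.lt_sqrt hr.le).mp hy])
  refine (measure_mono hsub).trans ((hsmall _ (Real.sqrt_nonneg _)).trans
    (ENNReal.ofReal_le_ofReal ?_))
  rw [mul_pow, mul_pow, mul_comm 2, mul_assoc, mul_assoc]
  gcongr
  rw [← mul_assoc, mul_comm _ 2]
  exact pow_sqrt_sub_sq_div_le hk ht r

theorem lintegral_sqrt_sub_le {Y : Type*} [MeasurableSpace Y] {ν : Measure Y}
    [IsProbabilityMeasure ν] {ζ : Y → ℝ} (hζ : Measurable ζ) (hζ0 : ∀ y, 0 ≤ ζ y) {k : ℕ}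
    {M : ℝ} (hM : 0 ≤ M)
    (hsmall : ∀ u, 0 ≤ u → ν {y | √(ζ y) ≤ u * √k} ≤ ENNReal.ofReal ((M * u) ^ k))
    {t : ℝ} (ht : 0 ≤ t) :
    ∫⁻ y, ENNReal.ofReal √(t ^ 2 * (k + 1) - ζ y) ∂ν ≤ ENNReal.ofReal (4 * t * (M * t) ^ k) := by
  rcases eq_or_ne k 0 with rfl | hk
  · simp only [Nat.cast_zero, zero_add, mul_one, pow_zero]
    calc ∫⁻ y, ENNReal.ofReal √(t ^ 2 - ζ y) ∂ν
        ≤ ∫⁻ _, ENNReal.ofReal t ∂ν := lintegral_mono fun y => ENNReal.ofReal_le_ofReal <| by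
          simpa [Real.sqrt_sq ht] using Real.sqrt_le_sqrt (by linarith [hζ0 y] : t ^ 2 - ζ y ≤ t ^ 2)
      _ ≤ ENNReal.ofReal (4 * t) := by
        rw [lintegral_const, measure_univ, mul_one]
        exact ENNReal.ofReal_le_ofReal (by linarith)
  rcases ht.eq_or_lt with rfl | ht
  · simp [Real.sqrt_eq_zero_of_nonpos, hζ0]
  refine (lintegral_ofReal_le_of_meas_lt_le_gaussian (ae_of_all _ fun _ => Real.sqrt_nonneg _)
    (by fun_prop) (by positivity) (by positivity)
    fun r hr => measure_lt_sqrt_sub_le hk hM hsmall ht hr).trans (ENNReal.ofReal_le_ofReal ?_)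
  calc 2 * (M * t) ^ k * (√(Real.pi / (k / (2 * (t ^ 2 * (k + 1))))) / 2)
      ≤ 2 * (M * t) ^ k * (4 * t / 2) := by
        gcongr
        exact Real.sqrt_pi_div_le hk ht.le
    _ = 4 * t * (M * t) ^ k := by ring

theorem prod_setOf_add_mul_sq_le_lintegral {Y : Type*} [MeasurableSpace Y] {μ₀ : Measure ℝ}
    [SFinite μ₀] (hμ₀ : μ₀ ≤ volume) {ν : Measure Y} [SFinite ν] {ζ c : Y → ℝ}
    (hζ : Measurable ζ) (hc : Measurable c) {σ : ℝ} (hσ : 0 < σ) (R : ℝ) :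
    μ₀.prod ν {p | ζ p.2 + σ * (p.1 - c p.2) ^ 2 ≤ R} ≤
      ∫⁻ y, ENNReal.ofReal (2 * √((R - ζ y) / σ)) ∂ν := by
  rw [Measure.prod_apply_symm (measurableSet_le (by fun_prop) measurable_const)]
  refine lintegral_mono fun y => ?_
  calc μ₀ ((fun a => (a, y)) ⁻¹' {p | ζ p.2 + σ * (p.1 - c p.2) ^ 2 ≤ R})
      ≤ volume {a | σ * (a - c y) ^ 2 ≤ R - ζ y} :=
        (hμ₀ _).trans (measure_mono fun a ha => by
          simp only [Set.mem_preimage, Set.mem_ofPred_eq] at ha ⊢; linarith)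
    _ ≤ ENNReal.ofReal (2 * √((R - ζ y) / σ)) := volume_setOf_mul_sq_sub_le hσ _ _

theorem measure_add_mul_sq_le_of_indepFun {Ω Y : Type*} [MeasurableSpace Ω] [MeasurableSpace Y]
    {μ : Measure Ω} [IsProbabilityMeasure μ] {A : Ω → ℝ} {Z : Ω → Y} (hA : Measurable A)
    (hZ : Measurable Z) (hAZ : IndepFun A Z μ) (hdens : μ.map A ≤ volume) {ζ c : Y → ℝ}
    (hζ : Measurable ζ) (hζ0 : ∀ y, 0 ≤ ζ y) (hc : Measurable c) {σ : ℝ} (hσ : 1 / 4 ≤ σ)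
    {k : ℕ} {M : ℝ} (hM : 16 ≤ M)
    (hsmall : ∀ u, 0 ≤ u → μ {ω | √(ζ (Z ω)) ≤ u * √k} ≤ ENNReal.ofReal ((M * u) ^ k))
    {t : ℝ} (ht : 0 ≤ t) :
    μ {ω | ζ (Z ω) + σ * (A ω - c (Z ω)) ^ 2 ≤ t ^ 2 * (k + 1)} ≤
      ENNReal.ofReal ((M * t) ^ (k + 1)) := by
  set R := t ^ 2 * (k + 1)
  have := Measure.isProbabilityMeasure_map (μ := μ) hZ.aemeasurable
  have hlaw := (indepFun_iff_map_prod_eq_prod_map_map hA.aemeasurable hZ.aemeasurable).mp hAZ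
  have hsmall' : ∀ u, 0 ≤ u → μ.map Z {y | √(ζ y) ≤ u * √k} ≤ ENNReal.ofReal ((M * u) ^ k) :=
    fun u hu => by
      rw [Measure.map_apply hZ (measurableSet_le (by fun_prop) measurable_const)]
      exact hsmall u hu
  have hwidth : ∀ x : ℝ, 2 * √(x / σ) ≤ 4 * √x := fun x => by
    rw [Real.sqrt_div' _ (by linarith), ← mul_div_assoc,
      div_le_iff₀ (Real.sqrt_pos.mpr (by linarith))]
    have : 1 / 2 ≤ √σ := by
      rw [Real.le_sqrt' (by norm_num)]; linarith
    nlinarith [Real.sqrt_nonneg x]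
  calc μ {ω | ζ (Z ω) + σ * (A ω - c (Z ω)) ^ 2 ≤ R}
      = (μ.map A).prod (μ.map Z) {p | ζ p.2 + σ * (p.1 - c p.2) ^ 2 ≤ R} := by
        rw [← hlaw, Measure.map_apply (hA.prodMk hZ)
          (measurableSet_le (by fun_prop) measurable_const)]
        rfl
    _ ≤ ∫⁻ y, ENNReal.ofReal (2 * √((R - ζ y) / σ)) ∂μ.map Z :=
        prod_setOf_add_mul_sq_le_lintegral hdens hζ hc (by linarith) R
    _ ≤ ∫⁻ y, ENNReal.ofReal 4 * ENNReal.ofReal √(R - ζ y) ∂μ.map Z :=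
        lintegral_mono fun y => by
          rw [← ENNReal.ofReal_mul (by norm_num)]
          exact ENNReal.ofReal_le_ofReal (hwidth _)
    _ ≤ ENNReal.ofReal 4 * ENNReal.ofReal (4 * t * (M * t) ^ k) := by
        rw [lintegral_const_mul' _ _ ENNReal.ofReal_ne_top]
        gcongr
        exact lintegral_sqrt_sub_le hζ hζ0 (by linarith) hsmall' ht
    _ ≤ ENNReal.ofReal ((M * t) ^ (k + 1)) := by
        rw [← ENNReal.ofReal_mul (by norm_num)]
        refine ENNReal.ofReal_le_ofReal ?_
        rw [pow_succ]
        have : 0 ≤ (M * t) ^ k := pow_nonneg (mul_nonneg (by linarith) ht) k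
        nlinarith [mul_nonneg this ht]

theorem ProbabilityTheory.iIndepFun.indepFun_zero_tail {Ω β : Type*} [MeasurableSpace Ω]
    [MeasurableSpace β] {μ : Measure Ω} {m : ℕ} {X : Fin (m + 1) → Ω → β}
    (hX : iIndepFun X μ) (hXm : ∀ i, Measurable (X i)) :
    IndepFun (X 0) (fun ω (j : Fin m) => X j.succ ω) μ := by
  have h := hX.indepFun_finset {0} (Finset.univ.erase 0) (by simp) hXm
  refine h.comp (φ := fun x => x ⟨0, Finset.mem_singleton_self 0⟩)
    (ψ := fun x (j : Fin m) => x ⟨j.succ, by simp [Fin.succ_ne_zero]⟩) ?_ ?_ <;> fun_prop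

/-- Removal of a large `P e_1` (Proposition "Removal of large `Pe_i`"): the inductive step
for the theorem on densities of projections. -/
theorem removal_of_large_Pe1 :
    ∃ C₀ : ℝ, 0 < C₀ ∧
      ∀ (n d : ℕ) (hn : 0 < n) (Ω : Type) (_ : MeasureSpace Ω)
        (_ : IsProbabilityMeasure (ℙ : Measure Ω))
        (X : Fin n → Ω → ℝ),
        (∀ i, Measurable (X i)) →
        iIndepFun X ℙ →
        -- the coordinates have densities bounded by `1`
        (∀ i, Measure.map (X i) ℙ ≤ volume) →
        ∀ P Q : Matrix (Fin n) (Fin n) ℝ,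
          -- `P` is the orthogonal projection onto a `d`-dimensional subspace
          Pᵀ = P → P * P = P → P.rank = d →
          -- `‖P e₁‖₂ ≥ 1/2`
          1 / 2 ≤ eNormR (P *ᵥ Pi.single (⟨0, hn⟩ : Fin n) 1) →
          -- `Q` is the orthogonal projection with `ker Q = span (ker P, P e₁)`
          Qᵀ = Q → Q * Q = Q →
          LinearMap.ker Q.mulVecLin =
            LinearMap.ker P.mulVecLin ⊔ Submodule.span ℝ {P *ᵥ Pi.single (⟨0, hn⟩ : Fin n) 1} →
          ∀ M : ℝ, C₀ ≤ M →
          -- hypothesis for `Q X`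
          (∀ t : ℝ, 0 ≤ t →
            (ℙ {ω | eNormR (Q *ᵥ (fun i => X i ω)) ≤
                t * Real.sqrt ((d : ℝ) - 1)}).toReal ≤ (M * t) ^ (d - 1)) →
          -- conclusion for `P X`
          ∀ t : ℝ, 0 ≤ t →
            (ℙ {ω | eNormR (P *ᵥ (fun i => X i ω)) ≤
              t * Real.sqrt d}).toReal ≤ (M * t) ^ d := by
  refine ⟨16, by norm_num, fun n d hn Ω _ _ X hXm hind hdens P Q hPt hPP _ hPe hQt hQQ hker
    M hM hQX t ht => ?_⟩
  rcases d with _ | k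
  · rw [pow_zero]
    exact measureReal_le_one
  obtain ⟨m, rfl⟩ := Nat.exists_eq_add_one_of_ne_zero hn.ne'
  obtain ⟨σ, c, hσ, hc, hPQ⟩ := exists_dotProduct_mulVec_cons_eq hPt hPP hQt hQQ hker hPe
  set Z : Ω → Fin m → ℝ := fun ω j => X j.succ ω
  set ζ : (Fin m → ℝ) → ℝ := fun y => (Q *ᵥ Fin.cons 0 y) ⬝ᵥ (Q *ᵥ Fin.cons 0 y)
  have hX : ∀ ω, (fun i => X i ω) = Fin.cons (X 0 ω) (Z ω) := fun ω => (Fin.cons_self_tail _).symm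
  have hsmall : ∀ u, 0 ≤ u → ℙ {ω | √(ζ (Z ω)) ≤ u * √k} ≤ ENNReal.ofReal ((M * u) ^ k) := by
    intro u hu
    have := hQX u hu
    simp only [hX, eNormR_eq_sqrt_dotProduct, (hPQ _ _).1, Nat.cast_add, Nat.cast_one,
      add_sub_cancel_right, Nat.add_sub_cancel] at this
    exact (ENNReal.le_ofReal_iff_toReal_le (measure_ne_top _ _)
      (pow_nonneg (mul_nonneg (by linarith) hu) k)).mpr this
  simp only [eNormR_le_mul_sqrt_iff _ ht (Nat.cast_nonneg (k + 1)), hX, (hPQ _ _).2]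
  push_cast
  refine ENNReal.toReal_le_of_le_ofReal (pow_nonneg (mul_nonneg (by linarith) ht) _) ?_
  exact measure_add_mul_sq_le_of_indepFun (ζ := ζ) (hXm 0) (by fun_prop)
    (hind.indepFun_zero_tail hXm) (hdens 0) (by fun_prop)
    (fun y => Finset.sum_nonneg fun i _ => mul_self_nonneg _) hc.measurable hσ hM hsmall ht
end

section
/- There is an absolute constant M₀ with the following property. Let Z₁, Z₂ ≥ 0 be random variables on a common probability space and let d > 1 and M ≥ M₀ be real numbers. Assume: (1) for every t ≥ 0, the conditional probability P(Z₁ ≤ t | Z₂) ≤ 2t almost surely; and (2) P(Z₂ ≤ t√(d−1)) ≤ (Mt)^{d−1} for all t ≥ 0. Then P( √(Z₁² + Z₂²) ≤ t√d ) ≤ (Mt)^d for all t ≥ 0. -/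
/-!
Put `r = t√d`, `n = ⌊√(d-1)⌋ + 1` and cut the disk `Z₁² + Z₂² ≤ r²` into the horizontal strips
`a (j+1) < Z₂ ≤ a j`, `a j = √(r² - (r j/n)²)`; what is left, `Z₂ ≤ 0`, is null by the small ball
bound at `t = 0`. On the `j`-th strip `Z₁ ≤ r (j+1)/n`, so the conditional bound charges it at most
`2 r (j+1)/n · P(a (j+1) < Z₂ ≤ a j)`, and summation by parts bounds the total by
`(2r/n) ∑_{j<n} P(Z₂ ≤ a j)`. The small ball bound for `Z₂` gives
`P(Z₂ ≤ a j) ≤ √e (Mt)^(d-1) exp(-(d-1)(j/n)²/2)`, a Gaussian profile whose sum over `j < n` is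
at most `10` exactly because `n ≈ √(d-1)`; as `r/n ≤ 3t/2`, the probability is at most
`60 t (Mt)^(d-1) ≤ (Mt)^d`.
-/

open MeasureTheory ProbabilityTheory Finset Real

section CondExp

variable {Ω : Type*} {m m₀ : MeasurableSpace Ω} {μ : Measure Ω} [IsFiniteMeasure μ]

theorem measureReal_inter_le_of_condExp_indicator_le (hm : m ≤ m₀) {S A : Set Ω}
    (hS : MeasurableSet S) (hA : MeasurableSet[m] A) {c : ℝ}
    (hc : ∀ᵐ ω ∂μ, (μ[S.indicator (fun _ => (1 : ℝ)) | m]) ω ≤ c) :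
    μ.real (S ∩ A) ≤ c * μ.real A := by
  have hint : Integrable (S.indicator fun _ => (1 : ℝ)) μ := (integrable_const 1).indicator hS
  calc μ.real (S ∩ A) = ∫ ω in A, S.indicator (fun _ => (1 : ℝ)) ω ∂μ := by
        rw [← measureReal_restrict_apply hS]
        exact (integral_indicator_one hS).symm
    _ = ∫ ω in A, (μ[S.indicator (fun _ => (1 : ℝ)) | m]) ω ∂μ :=
        (setIntegral_condExp hm hint hA).symm
    _ ≤ ∫ _ in A, c ∂μ :=
        setIntegral_mono_ae integrable_condExp.integrableOn integrableOn_const hc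
    _ = c * μ.real A := by rw [setIntegral_const, smul_eq_mul, mul_comm]

end CondExp

theorem exists_succ_lt_le_of_le_of_lt {α : Type*} [LinearOrder α] {a : ℕ → α} {y : α} {n : ℕ}
    (h0 : y ≤ a 0) (hn : a n < y) : ∃ j < n, a (j + 1) < y ∧ y ≤ a j := by
  induction n with
  | zero => exact absurd h0 hn.not_ge
  | succ n ih =>
    by_cases hy : y ≤ a n
    · exact ⟨n, n.lt_succ_self, hn, hy⟩
    · obtain ⟨j, hj, hj'⟩ := ih (not_le.mp hy)
      exact ⟨j, hj.trans n.lt_succ_self, hj'⟩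

theorem exists_slice_of_sq_add_sq_le {x y r : ℝ} {h : ℕ → ℝ} {n : ℕ} (h_nonneg : ∀ j, 0 ≤ h j)
    (h_zero : h 0 = 0) (h_last : r ^ 2 ≤ h n ^ 2) (hxy : x ^ 2 + y ^ 2 ≤ r ^ 2) (hy : 0 < y) :
    ∃ j < n, x ≤ h (j + 1) ∧ √(r ^ 2 - h (j + 1) ^ 2) < y ∧ y ≤ √(r ^ 2 - h j ^ 2) := by
  have h0 : y ≤ √(r ^ 2 - h 0 ^ 2) :=
    (le_sqrt hy.le (by nlinarith)).2 (by rw [h_zero]; nlinarith)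
  have hn : √(r ^ 2 - h n ^ 2) < y := by rwa [sqrt_eq_zero'.2 (by linarith)]
  obtain ⟨j, hj, hlt, hle⟩ := exists_succ_lt_le_of_le_of_lt (a := fun j => √(r ^ 2 - h j ^ 2)) h0 hn
  refine ⟨j, hj, ?_, hlt, hle⟩
  have hx : x ^ 2 < h (j + 1) ^ 2 := by linarith [(sqrt_lt' hy).1 hlt]
  exact (le_abs_self x).trans (abs_lt_of_sq_lt_sq hx (h_nonneg _)).le

theorem sum_range_succ_mul_sub (F : ℕ → ℝ) (n : ℕ) :
    ∑ j ∈ range n, ((j : ℝ) + 1) * (F j - F (j + 1)) = ∑ j ∈ range n, F j - n * F n := by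
  induction n with
  | zero => simp
  | succ n ih =>
    rw [sum_range_succ, ih, sum_range_succ]
    push_cast
    ring

theorem one_add_mul_one_sub_le_exp_sub {a b : ℝ} (hb : b ≤ 1) :
    (1 + a) * (1 - b) ≤ exp (a - b) := by
  rw [sub_eq_add_neg a b, exp_add]
  exact mul_le_mul (by linarith [add_one_le_exp a]) (by linarith [add_one_le_exp (-b)])
    (by linarith) (exp_nonneg a)

theorem mul_rpow_le_of_sq_le_mul_exp {M s t p v : ℝ} (hM : 0 ≤ M) (hs : 0 ≤ s) (ht : 0 ≤ t)
    (hp : 0 ≤ p) (h : s ^ 2 ≤ t ^ 2 * exp v) : (M * s) ^ p ≤ (M * t) ^ p * exp (p * v / 2) := by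
  have hs' : s ≤ t * exp (v / 2) := by
    refine (pow_le_pow_iff_left₀ hs (by positivity) two_ne_zero).1 ?_
    rwa [mul_pow, ← exp_nat_mul, Nat.cast_two, mul_div_cancel₀ _ two_ne_zero]
  calc (M * s) ^ p ≤ (M * (t * exp (v / 2))) ^ p :=
        rpow_le_rpow (by positivity) (mul_le_mul_of_nonneg_left hs' hM) hp
    _ = (M * t) ^ p * exp (p * v / 2) := by
        rw [← mul_assoc, mul_rpow (by positivity) (exp_nonneg _), ← exp_mul]
        ring_nf

theorem exp_neg_mul_sq_div_le {p : ℝ} {n j : ℕ} (hn : ((n : ℝ) - 1) ^ 2 ≤ p) (hj : j < n) :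
    exp (-(p * (j / n) ^ 2) / 2) ≤ (9 / 10) ^ j := by
  rcases Nat.eq_zero_or_pos j with rfl | hj0
  · simp
  have hj1 : (1 : ℝ) ≤ j := by exact_mod_cast hj0
  have hjn : (j : ℝ) + 1 ≤ n := by exact_mod_cast hj
  have hexp : exp (-(1 / 8)) ≤ 9 / 10 := by
    rw [exp_neg, inv_le_comm₀ (exp_pos _) (by norm_num)]
    linarith [add_one_le_exp (1 / 8 : ℝ)]
  have hquad : (j : ℝ) / 8 ≤ p * (j / n) ^ 2 / 2 := by
    have hhalf : (n : ℝ) ^ 2 / 4 ≤ ((n : ℝ) - 1) ^ 2 := by nlinarith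
    rw [div_pow, mul_div_assoc', div_div, le_div_iff₀ (by nlinarith)]
    nlinarith [mul_le_mul_of_nonneg_left (hhalf.trans hn) (sq_nonneg (j : ℝ)),
      mul_le_mul_of_nonneg_left (show (j : ℝ) ≤ j ^ 2 by nlinarith) (sq_nonneg (n : ℝ))]
  calc exp (-(p * (j / n) ^ 2) / 2) ≤ exp (-(1 / 8)) ^ j := by
        rw [← exp_nat_mul]; exact exp_le_exp.2 (by linarith)
    _ ≤ (9 / 10) ^ j := pow_le_pow_left₀ (exp_nonneg _) hexp j

theorem sum_range_exp_neg_mul_div_sq_le {p : ℝ} {n : ℕ} (hn : ((n : ℝ) - 1) ^ 2 ≤ p) :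
    ∑ j ∈ range n, exp (-(p * (j / n) ^ 2) / 2) ≤ 10 :=
  calc ∑ j ∈ range n, exp (-(p * (j / n) ^ 2) / 2) ≤ ∑ j ∈ range n, (9 / 10 : ℝ) ^ j :=
        sum_le_sum fun j hj => exp_neg_mul_sq_div_le hn (mem_range.1 hj)
    _ ≤ (9 / 10) ^ 0 / (1 - 9 / 10) := by
        rw [range_eq_Ico]; exact geom_sum_Ico_le_of_lt_one (by norm_num) (by norm_num)
    _ = 10 := by norm_num

section Slicing

variable {Ω : Type*} [MeasurableSpace Ω] {μ : Measure Ω} [IsFiniteMeasure μ] {X Y : Ω → ℝ}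

theorem measureReal_le_add_sum_of_subset_slices (hY : Measurable Y) {E B : Set Ω}
    {S : ℕ → Set Ω} (hS : ∀ j, MeasurableSet (S j)) {T : ℕ → Set ℝ} (hT : ∀ j, MeasurableSet (T j))
    {c : ℕ → ℝ} {n : ℕ}
    (hcond : ∀ j < n, ∀ᵐ ω ∂μ,
      (μ[(S j).indicator (fun _ => (1 : ℝ)) |
        MeasurableSpace.comap Y Real.measurableSpace]) ω ≤ c j)
    (hE : E ⊆ B ∪ ⋃ j ∈ range n, S j ∩ Y ⁻¹' T j) :
    μ.real E ≤ μ.real B + ∑ j ∈ range n, c j * μ.real (Y ⁻¹' T j) :=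
  calc μ.real E ≤ μ.real (B ∪ ⋃ j ∈ range n, S j ∩ Y ⁻¹' T j) := measureReal_mono hE
    _ ≤ μ.real B + ∑ j ∈ range n, μ.real (S j ∩ Y ⁻¹' T j) :=
        (measureReal_union_le _ _).trans (add_le_add le_rfl (measureReal_biUnion_finset_le _ _))
    _ ≤ μ.real B + ∑ j ∈ range n, c j * μ.real (Y ⁻¹' T j) :=
        add_le_add le_rfl (sum_le_sum fun j hj => measureReal_inter_le_of_condExp_indicator_le
          hY.comap_le (hS j) ⟨T j, hT j, rfl⟩ (hcond j (mem_range.1 hj)))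

theorem measureReal_preimage_Ioc (hY : Measurable Y) {b c : ℝ} (hbc : b ≤ c) :
    μ.real (Y ⁻¹' Set.Ioc b c) = μ.real {ω | Y ω ≤ c} - μ.real {ω | Y ω ≤ b} := by
  have hsub : {ω | Y ω ≤ b} ⊆ {ω | Y ω ≤ c} := fun ω hω => le_trans hω hbc
  rw [← measureReal_sdiff hsub (hY measurableSet_Iic)]
  congr 1
  ext ω
  simp [and_comm]

theorem measureReal_sq_add_sq_le_le (hX : Measurable X) (hY : Measurable Y) {K : ℝ} (hK : 0 ≤ K)
    (hcond : ∀ s, 0 ≤ s → ∀ᵐ ω ∂μ,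
      (μ[{ω | X ω ≤ s}.indicator (fun _ => (1 : ℝ)) |
        MeasurableSpace.comap Y Real.measurableSpace]) ω ≤ K * s)
    {r : ℝ} (hr : 0 ≤ r) {n : ℕ} (hn : 0 < n) :
    μ.real {ω | X ω ^ 2 + Y ω ^ 2 ≤ r ^ 2} ≤ μ.real {ω | Y ω ≤ 0} +
      K * (r / n) * ∑ j ∈ range n, μ.real {ω | Y ω ≤ √(r ^ 2 - (r * (j / n)) ^ 2)} := by
  set h : ℕ → ℝ := fun j => r * (j / n) with h_def
  set a : ℕ → ℝ := fun j => √(r ^ 2 - h j ^ 2)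
  set F : ℕ → ℝ := fun j => μ.real {ω | Y ω ≤ a j}
  have ha : Antitone a := fun i j hij => sqrt_le_sqrt (by simp only [h]; gcongr)
  have hE : {ω | X ω ^ 2 + Y ω ^ 2 ≤ r ^ 2} ⊆ {ω | Y ω ≤ 0} ∪
      ⋃ j ∈ range n, {ω | X ω ≤ h (j + 1)} ∩ Y ⁻¹' Set.Ioc (a (j + 1)) (a j) := by
    intro ω hω
    by_cases hy : Y ω ≤ 0
    · exact Or.inl hy
    obtain ⟨j, hj, hx, hlt, hle⟩ := exists_slice_of_sq_add_sq_le (h := h) (n := n)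
      (fun j => by positivity) (by simp [h]) (by simp [h, hn.ne']) hω (not_le.1 hy)
    exact Or.inr (Set.mem_biUnion (mem_range.2 hj) ⟨hx, hlt, hle⟩)
  calc μ.real {ω | X ω ^ 2 + Y ω ^ 2 ≤ r ^ 2}
      ≤ μ.real {ω | Y ω ≤ 0} +
          ∑ j ∈ range n, K * h (j + 1) * μ.real (Y ⁻¹' Set.Ioc (a (j + 1)) (a j)) :=
        measureReal_le_add_sum_of_subset_slices hY (fun _ => hX measurableSet_Iic)
          (fun _ => measurableSet_Ioc) (fun j _ => hcond (h (j + 1)) (by positivity)) hE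
    _ = μ.real {ω | Y ω ≤ 0} +
          K * (r / n) * ∑ j ∈ range n, ((j : ℝ) + 1) * (F j - F (j + 1)) := by
        rw [mul_sum]
        congr 1
        refine sum_congr rfl fun j _ => ?_
        rw [measureReal_preimage_Ioc hY (ha j.le_succ), h_def]
        push_cast
        ring
    _ ≤ μ.real {ω | Y ω ≤ 0} + K * (r / n) * ∑ j ∈ range n, F j := by
        rw [sum_range_succ_mul_sub]
        gcongr
        linarith [mul_nonneg (Nat.cast_nonneg n) (measureReal_nonneg : 0 ≤ F n)]

end Slicing

section SmallBall

variable {Ω : Type*} [MeasurableSpace Ω] {μ : Measure Ω} {Y : Ω → ℝ} {d M t : ℝ}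

theorem measureReal_le_sqrt_sub_sq_le (hd : 1 < d) (hM : 0 ≤ M) (ht : 0 ≤ t)
    (hball : ∀ s, 0 ≤ s → μ.real {ω | Y ω ≤ s * √(d - 1)} ≤ (M * s) ^ (d - 1))
    {u : ℝ} (hu0 : 0 ≤ u) (hu1 : u ≤ 1) :
    μ.real {ω | Y ω ≤ √((t * √d) ^ 2 - (t * √d * u) ^ 2)} ≤
      (M * t) ^ (d - 1) * (exp (1 / 2) * exp (-((d - 1) * u ^ 2) / 2)) := by
  have hp : 0 < d - 1 := sub_pos.2 hd
  have hu2 : u ^ 2 ≤ 1 := pow_le_one₀ hu0 hu1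
  have hr : (t * √d) ^ 2 = t ^ 2 * d := by rw [mul_pow, sq_sqrt (by linarith)]
  have hτ : (t * √d) ^ 2 - (t * √d * u) ^ 2 = t ^ 2 * d * (1 - u ^ 2) := by
    rw [mul_pow _ u, hr]; ring
  have hτ0 : 0 ≤ (t * √d) ^ 2 - (t * √d * u) ^ 2 := by
    rw [hτ]; exact mul_nonneg (by positivity) (by linarith)
  set s := √((t * √d) ^ 2 - (t * √d * u) ^ 2) / √(d - 1)
  have hs : s * √(d - 1) = √((t * √d) ^ 2 - (t * √d * u) ^ 2) :=
    div_mul_cancel₀ _ (sqrt_pos.2 hp).ne'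
  have hs2 : s ^ 2 ≤ t ^ 2 * exp (1 / (d - 1) - u ^ 2) :=
    calc s ^ 2 = t ^ 2 * ((1 + 1 / (d - 1)) * (1 - u ^ 2)) := by
          rw [div_pow, sq_sqrt hτ0, sq_sqrt hp.le, hτ]
          field_simp
          ring
      _ ≤ t ^ 2 * exp (1 / (d - 1) - u ^ 2) :=
          mul_le_mul_of_nonneg_left (one_add_mul_one_sub_le_exp_sub hu2) (sq_nonneg t)
  calc μ.real {ω | Y ω ≤ √((t * √d) ^ 2 - (t * √d * u) ^ 2)} ≤ (M * s) ^ (d - 1) :=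
        hs ▸ hball s (by positivity)
    _ ≤ (M * t) ^ (d - 1) * exp ((d - 1) * (1 / (d - 1) - u ^ 2) / 2) :=
        mul_rpow_le_of_sq_le_mul_exp hM (by positivity) ht hp.le hs2
    _ = (M * t) ^ (d - 1) * (exp (1 / 2) * exp (-((d - 1) * u ^ 2) / 2)) := by
        rw [← exp_add]
        congr 2
        field_simp
        ring

theorem sum_measureReal_le_sqrt_sub_sq_le (hd : 1 < d) (hM : 0 ≤ M) (ht : 0 ≤ t)
    (hball : ∀ s, 0 ≤ s → μ.real {ω | Y ω ≤ s * √(d - 1)} ≤ (M * s) ^ (d - 1))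
    {n : ℕ} (hn : ((n : ℝ) - 1) ^ 2 ≤ d - 1) :
    ∑ j ∈ range n, μ.real {ω | Y ω ≤ √((t * √d) ^ 2 - (t * √d * (j / n)) ^ 2)} ≤
      10 * exp (1 / 2) * (M * t) ^ (d - 1) :=
  calc ∑ j ∈ range n, μ.real {ω | Y ω ≤ √((t * √d) ^ 2 - (t * √d * (j / n)) ^ 2)}
      ≤ ∑ j ∈ range n, (M * t) ^ (d - 1) * (exp (1 / 2) * exp (-((d - 1) * (j / n) ^ 2) / 2)) :=
        sum_le_sum fun j hj => measureReal_le_sqrt_sub_sq_le hd hM ht hball (by positivity)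
          (div_le_one_of_le₀ (by exact_mod_cast (mem_range.1 hj).le) (Nat.cast_nonneg n))
    _ = (M * t) ^ (d - 1) * exp (1 / 2) * ∑ j ∈ range n, exp (-((d - 1) * (j / n) ^ 2) / 2) := by
        rw [mul_sum]
        simp only [mul_assoc]
    _ ≤ (M * t) ^ (d - 1) * exp (1 / 2) * 10 := by
        gcongr
        exact sum_range_exp_neg_mul_div_sq_le hn
    _ = 10 * exp (1 / 2) * (M * t) ^ (d - 1) := by ring

end SmallBall

theorem exists_nat_sub_one_sq_le_lt_sq {p : ℝ} (hp : 0 ≤ p) :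
    ∃ n : ℕ, 0 < n ∧ ((n : ℝ) - 1) ^ 2 ≤ p ∧ p < (n : ℝ) ^ 2 := by
  refine ⟨⌊√p⌋₊ + 1, Nat.succ_pos _, ?_, ?_⟩
  · calc ((⌊√p⌋₊ + 1 : ℕ) - 1 : ℝ) ^ 2 = (⌊√p⌋₊ : ℝ) ^ 2 := by push_cast; ring
      _ ≤ √p ^ 2 := pow_le_pow_left₀ (Nat.cast_nonneg _) (Nat.floor_le (sqrt_nonneg p)) 2
      _ = p := sq_sqrt hp
  · calc p = √p ^ 2 := (sq_sqrt hp).symm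
      _ < ((⌊√p⌋₊ + 1 : ℕ) : ℝ) ^ 2 := by
        push_cast
        exact pow_lt_pow_left₀ (Nat.lt_floor_add_one _) (sqrt_nonneg p) two_ne_zero

/-- Tensorization lemma (Lemma "Tensorization"): combining a conditional small ball bound
for `Z₁` with a small ball bound for `Z₂`. -/
theorem tensorization_lemma :
    ∃ M₀ : ℝ, 0 < M₀ ∧
      ∀ (Ω : Type) (_ : MeasureSpace Ω) (_ : IsProbabilityMeasure (ℙ : Measure Ω))
        (Z₁ Z₂ : Ω → ℝ), Measurable Z₁ → Measurable Z₂ →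
        (∀ ω, 0 ≤ Z₁ ω) → (∀ ω, 0 ≤ Z₂ ω) →
        ∀ (d M : ℝ), 1 < d → M₀ ≤ M →
        -- (1) conditional small ball bound for `Z₁` given `Z₂`
        (∀ t : ℝ, 0 ≤ t →
          ∀ᵐ ω ∂ℙ,
            (ℙ[Set.indicator {ω' | Z₁ ω' ≤ t} (fun _ => (1 : ℝ)) |
              MeasurableSpace.comap Z₂ Real.measurableSpace]) ω ≤ 2 * t) →
        -- (2) small ball bound for `Z₂`
        (∀ t : ℝ, 0 ≤ t →
          (ℙ {ω | Z₂ ω ≤ t * Real.sqrt (d - 1)}).toReal ≤ (M * t) ^ (d - 1)) →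
        -- conclusion
        ∀ t : ℝ, 0 ≤ t →
          (ℙ {ω | Real.sqrt ((Z₁ ω) ^ 2 + (Z₂ ω) ^ 2) ≤ t * Real.sqrt d}).toReal ≤
            (M * t) ^ d := by
  refine ⟨60, by norm_num, ?_⟩
  intro Ω _ _ Z₁ Z₂ hZ₁ hZ₂ _ _ d M hd hM hcond hball t ht
  obtain ⟨n, hn, hle_sub_sq, hlt_sq⟩ := exists_nat_sub_one_sq_le_lt_sq (sub_nonneg.2 hd.le)
  have hwidth : t * √d / n ≤ 3 / 2 * t := by
    have hn1 : (1 : ℝ) ≤ n := by exact_mod_cast hn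
    have hd_le : √d ≤ 3 / 2 * n := (sqrt_le_left (by positivity)).2 (by nlinarith)
    rw [div_le_iff₀ (by positivity)]
    nlinarith
  have hzero : Measure.real ℙ {ω | Z₂ ω ≤ 0} ≤ 0 := by
    simpa [zero_rpow (sub_pos.2 hd).ne', measureReal_def] using hball 0 le_rfl
  have hexp : exp (1 / 2) ≤ 2 := by
    have := exp_bound_div_one_sub_of_interval' (x := 1 / 2) (by norm_num) (by norm_num)
    norm_num at this
    linarith
  have hdisk : {ω | √(Z₁ ω ^ 2 + Z₂ ω ^ 2) ≤ t * √d} =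
      {ω | Z₁ ω ^ 2 + Z₂ ω ^ 2 ≤ (t * √d) ^ 2} := by
    ext ω
    exact sqrt_le_left (by positivity)
  calc (ℙ {ω | √(Z₁ ω ^ 2 + Z₂ ω ^ 2) ≤ t * √d}).toReal
      = Measure.real ℙ {ω | Z₁ ω ^ 2 + Z₂ ω ^ 2 ≤ (t * √d) ^ 2} := by rw [hdisk]; rfl
    _ ≤ Measure.real ℙ {ω | Z₂ ω ≤ 0} + 2 * (t * √d / n) *
          ∑ j ∈ range n, Measure.real ℙ {ω | Z₂ ω ≤ √((t * √d) ^ 2 - (t * √d * (j / n)) ^ 2)} :=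
        measureReal_sq_add_sq_le_le hZ₁ hZ₂ zero_le_two hcond (by positivity) hn
    _ ≤ 0 + 2 * (3 / 2 * t) * (10 * 2 * (M * t) ^ (d - 1)) := by
        gcongr
        exact (sum_measureReal_le_sqrt_sub_sq_le hd (by linarith) ht hball hle_sub_sq).trans
          (by gcongr)
    _ = 60 * t * (M * t) ^ (d - 1) := by ring
    _ ≤ M * t * (M * t) ^ (d - 1) := by gcongr
    _ = (M * t) ^ d := by rw [← rpow_one_add' (by positivity) (by linarith), add_sub_cancel]
end

section
/- Let C > 0 and let V₁,…,V_l be independent non-negative random variables satisfying P(V_j < t) ≤ Ct for every t > 0 and every j. Then there is a constant c (depending only on C) such that P( Σ_{j=1}^l V_j² < t² l ) ≤ (ct)^l for every t > 0. -/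
/-!
Chernoff's bound with parameter `-1/t²` and independence reduce the claim to
`E exp(-V²/t²) ≤ 5 C t` for each `V = V_j`; the factor `e^l` comes from `exp(t⁻² · t² l)`.
On the event `⌊V/t⌋ = k`, of probability at most `C (k + 1) t`, the integrand is at most
`e^{-k²}`, and `∑ (k + 1) e^{-k²} ≤ 4`; the finitely many layers are truncated at a level `K`
with `e^{-K²} ≤ C t`.
-/

open MeasureTheory ProbabilityTheory Real Finset

lemma exists_nat_exp_neg_sq_le {ε : ℝ} (hε : 0 < ε) : ∃ K : ℕ, exp (-(K : ℝ) ^ 2) ≤ ε := by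
  obtain ⟨K, hK⟩ := exists_nat_ge ε⁻¹
  refine ⟨K, ?_⟩
  have hK_le_exp : (K : ℝ) ≤ exp ((K : ℝ) ^ 2) := by
    have := add_one_le_exp ((K : ℝ) ^ 2)
    nlinarith [sq_nonneg ((K : ℝ) - 1)]
  rw [exp_neg, inv_le_comm₀ (exp_pos _) hε]
  exact hK.trans hK_le_exp

lemma sum_range_succ_mul_exp_neg_sq_le_four (K : ℕ) :
    ∑ k ∈ range K, ((k : ℝ) + 1) * exp (-(k : ℝ) ^ 2) ≤ 4 := by
  have he : (2.7182818283 : ℝ) < exp 1 := exp_one_gt_d9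
  set r : ℝ := 2 / exp 1
  have hr0 : 0 ≤ r := by positivity
  have hr : r ≤ 3 / 4 := by
    rw [div_le_iff₀ (exp_pos 1)]; linarith
  -- `(k + 1) e^{-k²} ≤ 2^k e^{-k} = r^k`
  have hterm (k : ℕ) : ((k : ℝ) + 1) * exp (-(k : ℝ) ^ 2) ≤ r ^ k := by
    have h_succ : (k : ℝ) + 1 ≤ 2 ^ k := by exact_mod_cast Nat.lt_two_pow_self
    have h_exp : exp (-(k : ℝ) ^ 2) ≤ exp (-(k : ℝ)) := by
      have : (k : ℝ) ≤ (k : ℝ) ^ 2 := by exact_mod_cast Nat.le_self_pow two_ne_zero k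
      exact exp_le_exp.mpr (by linarith)
    have hr_pow : r ^ k = 2 ^ k * exp (-(k : ℝ)) := by
      rw [div_pow, exp_neg, ← exp_one_pow, div_eq_mul_inv]
    rw [hr_pow]
    gcongr
  calc ∑ k ∈ range K, ((k : ℝ) + 1) * exp (-(k : ℝ) ^ 2)
      ≤ ∑ k ∈ Ico 0 K, r ^ k := by
        rw [← range_eq_Ico]; exact sum_le_sum fun k _ => hterm k
    _ ≤ r ^ 0 / (1 - r) := geom_sum_Ico_le_of_lt_one hr0 (by linarith)
    _ ≤ 4 := by
        rw [pow_zero, div_le_iff₀ (by linarith)]; linarith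

lemma exp_neg_sq_le_sum_indicator {y : ℝ} (hy : 0 ≤ y) (K : ℕ) :
    exp (-y ^ 2) ≤
      ∑ k ∈ range K, (Set.Iio ((k : ℝ) + 1)).indicator (fun _ => exp (-(k : ℝ) ^ 2)) y +
        exp (-(K : ℝ) ^ 2) := by
  have h_nonneg : ∀ k ∈ range K,
      0 ≤ (Set.Iio ((k : ℝ) + 1)).indicator (fun _ => exp (-(k : ℝ) ^ 2)) y :=
    fun k _ => Set.indicator_nonneg (fun _ _ => (exp_pos _).le) _
  rcases lt_or_ge y K with hyK | hKy
  · set k := ⌊y⌋₊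
    have hk_mem : k ∈ range K := mem_range.mpr ((Nat.floor_lt hy).mpr hyK)
    have hk_term : (Set.Iio ((k : ℝ) + 1)).indicator (fun _ => exp (-(k : ℝ) ^ 2)) y =
        exp (-(k : ℝ) ^ 2) :=
      Set.indicator_of_mem (Set.mem_Iio.mpr (Nat.lt_floor_add_one y)) _
    have h_le : exp (-y ^ 2) ≤ exp (-(k : ℝ) ^ 2) := by
      gcongr; exact Nat.floor_le hy
    have := single_le_sum h_nonneg hk_mem
    rw [hk_term] at this
    linarith [exp_pos (-(K : ℝ) ^ 2)]
  · have h_le : exp (-y ^ 2) ≤ exp (-(K : ℝ) ^ 2) := by gcongr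
    linarith [sum_nonneg h_nonneg]

section SmallBall

variable {Ω : Type*} {m : MeasurableSpace Ω} {μ : Measure Ω}

lemma integrable_exp_of_nonpos [IsFiniteMeasure μ] {f : Ω → ℝ} (hf : Measurable f)
    (hf_nonpos : ∀ ω, f ω ≤ 0) : Integrable (fun ω => exp (f ω)) μ := by
  refine .of_bound (by fun_prop) 1 (ae_of_all _ fun ω => ?_)
  rw [norm_of_nonneg (exp_pos _).le, exp_le_one_iff]
  exact hf_nonpos ω

lemma integral_exp_neg_sq_le [IsProbabilityMeasure μ] {Y : Ω → ℝ} (hY : Measurable Y)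
    (hY_nonneg : ∀ ω, 0 ≤ Y ω) {D : ℝ} (hD : 0 < D)
    (h_small : ∀ u, 0 < u → μ.real {ω | Y ω < u} ≤ D * u) :
    ∫ ω, exp (-Y ω ^ 2) ∂μ ≤ 5 * D := by
  obtain ⟨K, hK⟩ := exists_nat_exp_neg_sq_le hD
  set f : ℕ → Ω → ℝ := fun k => {ω | Y ω < k + 1}.indicator (fun _ => exp (-(k : ℝ) ^ 2))
  have hf_int (k : ℕ) : Integrable (f k) μ :=
    (integrable_const _).indicator (measurableSet_lt hY measurable_const)
  have hf_integral (k : ℕ) : ∫ ω, f k ω ∂μ ≤ D * (((k : ℝ) + 1) * exp (-(k : ℝ) ^ 2)) := by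
    rw [integral_indicator_const _ (measurableSet_lt hY measurable_const), smul_eq_mul,
      ← mul_assoc]
    gcongr
    exact h_small _ (by positivity)
  have h_lhs_int : Integrable (fun ω => exp (-Y ω ^ 2)) μ :=
    integrable_exp_of_nonpos (by fun_prop) fun _ => neg_nonpos.mpr (sq_nonneg _)
  calc ∫ ω, exp (-Y ω ^ 2) ∂μ
      ≤ ∫ ω, (∑ k ∈ range K, f k ω + exp (-(K : ℝ) ^ 2)) ∂μ :=
        integral_mono h_lhs_int ((integrable_finsetSum _ fun k _ => hf_int k).add
          (integrable_const _)) fun ω => exp_neg_sq_le_sum_indicator (hY_nonneg ω) K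
    _ = ∑ k ∈ range K, ∫ ω, f k ω ∂μ + exp (-(K : ℝ) ^ 2) := by
        rw [integral_add (integrable_finsetSum _ fun k _ => hf_int k) (integrable_const _),
          integral_finsetSum _ fun k _ => hf_int k, integral_const, probReal_univ, one_smul]
    _ ≤ D * ∑ k ∈ range K, ((k : ℝ) + 1) * exp (-(k : ℝ) ^ 2) + D := by
        rw [mul_sum]; gcongr with k; exact hf_integral k
    _ ≤ 5 * D := by nlinarith [sum_range_succ_mul_exp_neg_sq_le_four K]

lemma mgf_sq_le_of_small_ball [IsProbabilityMeasure μ] {X : Ω → ℝ} (hX : Measurable X)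
    (hX_nonneg : ∀ ω, 0 ≤ X ω) {C t : ℝ} (hC : 0 < C) (ht : 0 < t)
    (h_small : ∀ u, 0 < u → μ.real {ω | X ω < u} ≤ C * u) :
    mgf (fun ω => X ω ^ 2) μ (-(t ^ 2)⁻¹) ≤ 5 * C * t := by
  have h_scaled : ∀ u, 0 < u → μ.real {ω | X ω / t < u} ≤ C * t * u := by
    intro u hu
    simp_rw [div_lt_iff₀ ht]
    linarith [h_small (u * t) (by positivity)]
  have h_mgf : mgf (fun ω => X ω ^ 2) μ (-(t ^ 2)⁻¹) = ∫ ω, exp (-(X ω / t) ^ 2) ∂μ := by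
    simp only [mgf]; congr with ω; ring
  rw [h_mgf, mul_assoc]
  exact integral_exp_neg_sq_le (hX.div_const t) (fun ω => div_nonneg (hX_nonneg ω) ht.le)
    (by positivity) h_scaled

lemma ProbabilityTheory.iIndepFun.measureReal_sum_le_le_exp_mul_prod_mgf {ι : Type*} [Fintype ι]
    {X : ι → Ω → ℝ} (h_indep : iIndepFun X μ) (h_meas : ∀ i, Measurable (X i)) {s : ℝ}
    (hs : s ≤ 0) (h_int : ∀ i, Integrable (fun ω => exp (s * X i ω)) μ) (a : ℝ) :
    μ.real {ω | ∑ i, X i ω ≤ a} ≤ exp (-s * a) * ∏ i, mgf (X i) μ s := by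
  have := h_indep.isProbabilityMeasure
  rw [← h_indep.mgf_sum h_meas]
  simpa only [Finset.sum_apply] using measure_le_le_exp_mul_mgf a hs
    (h_indep.integrable_exp_mul_sum h_meas fun i _ => h_int i)

end SmallBall

/-- Tensorization of small ball probabilities (Lemma "tensorisation"): if the independent
non-negative random variables `V_j` satisfy `P(V_j < t) ≤ C t`, then
`P(∑ V_j² < t² l) ≤ (c t)^l`. -/
theorem tensorization_small_ball (C : ℝ) (hC : 0 < C) :
    ∃ c : ℝ, 0 < c ∧
      ∀ (l : ℕ) (Ω : Type) (_ : MeasureSpace Ω)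
        (_ : IsProbabilityMeasure (ℙ : Measure Ω))
        (V : Fin l → Ω → ℝ),
        (∀ j, Measurable (V j)) →
        iIndepFun (m := fun _ : Fin l => (inferInstance : MeasurableSpace ℝ)) V ℙ →
        (∀ j ω, 0 ≤ V j ω) →
        (∀ j, ∀ t : ℝ, 0 < t → (ℙ {ω | V j ω < t}).toReal ≤ C * t) →
        ∀ t : ℝ, 0 < t →
          (ℙ {ω | ∑ j, (V j ω) ^ 2 < t ^ 2 * l}).toReal ≤ (c * t) ^ l := by
  refine ⟨5 * exp 1 * C, by positivity, ?_⟩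
  intro l Ω _ _ V hV_meas hV_indep hV_nonneg hV_small t ht
  set s : ℝ := -(t ^ 2)⁻¹
  have hs : s ≤ 0 := by simp only [s, neg_nonpos]; positivity
  have hX_indep : iIndepFun (fun j ω => V j ω ^ 2) ℙ :=
    hV_indep.comp (fun _ x => x ^ 2) fun _ => by fun_prop
  have hX_int (j : Fin l) : Integrable (fun ω => exp (s * V j ω ^ 2)) ℙ :=
    integrable_exp_of_nonpos (by fun_prop) fun _ => mul_nonpos_of_nonpos_of_nonneg hs (sq_nonneg _)
  have h_exp : exp (-s * (t ^ 2 * l)) = exp 1 ^ l := by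
    rw [exp_one_pow]; congr 1; simp only [s]; field_simp
  calc (ℙ {ω | ∑ j, (V j ω) ^ 2 < t ^ 2 * l}).toReal
      ≤ (ℙ : Measure Ω).real {ω | ∑ j, V j ω ^ 2 ≤ t ^ 2 * l} :=
        measureReal_mono (Set.ofPred_subset_ofPred.mpr fun _ h => h.le)
    _ ≤ exp (-s * (t ^ 2 * l)) * ∏ j, mgf (fun ω => V j ω ^ 2) ℙ s :=
        hX_indep.measureReal_sum_le_le_exp_mul_prod_mgf (fun j => by fun_prop) hs hX_int _
    _ ≤ exp 1 ^ l * ∏ _j : Fin l, 5 * C * t := by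
        rw [h_exp]
        gcongr with j
        · exact fun _ _ => mgf_nonneg
        · exact mgf_sq_le_of_small_ball (hV_meas j) (hV_nonneg j) hC ht (hV_small j)
    _ = (5 * exp 1 * C * t) ^ l := by
        rw [Fin.prod_const, ← mul_pow]; ring_nf
end

section
/- Let Z = X + iY ∈ ℂ^N be a random vector whose imaginary part Y ∈ ℝ^N is deterministic, and let X₁, X₂ be independent copies of X. Set Ẑ = (X₁, X₂) ∈ ℝ^{2N}. Let E be a complex linear subspace of ℂ^N and let Real(E) = { (Re z, Im z) : z ∈ E } ⊆ ℝ^{2N}. Then for every r ≥ 0, L(P_E Z, r) ≤ ( L(P_{Real(E)} Ẑ, 2r) )^{1/2}, where P_E and P_{Real(E)} denote the orthogonal projections onto E and Real(E) respectively. -/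
open MeasureTheory ProbabilityTheory

/-- The `ℝ`-linear map `Real : ℂ^N → ℝ^{2N}`, `z = x + iy ↦ (x, y)`. -/
noncomputable def realifyL (N : ℕ) :
    EuclideanSpace ℂ (Fin N) →ₗ[ℝ] EuclideanSpace ℝ (Fin N ⊕ Fin N) where
  toFun z := (WithLp.equiv 2 (Fin N ⊕ Fin N → ℝ)).symm
    (Sum.elim (fun j => (z j).re) (fun j => (z j).im))
  map_add' z w := by
    ext i
    cases i <;> rfl
  map_smul' c z := by
    ext i
    cases i with
    | inl j =>
        show ((c • z) j).re = c * (z j).re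
        simp [Complex.smul_re]
    | inr j =>
        show ((c • z) j).im = c * (z j).im
        simp [Complex.smul_im]

/-- The real version `Real(E) ⊆ ℝ^{2N}` of a complex subspace `E ⊆ ℂ^N`. -/
noncomputable def realifySub {N : ℕ} (E : Submodule ℂ (EuclideanSpace ℂ (Fin N))) :
    Submodule ℝ (EuclideanSpace ℝ (Fin N ⊕ Fin N)) :=
  Submodule.map (realifyL N) (E.restrictScalars ℝ)

/-- The Lévy concentration function of a random vector. -/
noncomputable def levyConc {Ω : Type} [MeasureSpace Ω] {F : Type*}
    [NormedAddCommGroup F] (W : Ω → F) (r : ℝ) : ENNReal :=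
  ⨆ w : F, ℙ {ω | ‖W ω - w‖ ≤ r}

/-!
Write `Z = X + iY`. For a fixed centre `w`, the event `‖P_E Z - w‖ ≤ r` is `{X ∈ T}` for a fixed
set `T`, so by independence `X₁, X₂ ∈ T` has probability `ℙ(X ∈ T)²`. On that event
`P_E (X₁ + i X₂)` is, up to a fixed shift, `(P_E(X₁ + iY) - w) + i (P_E(X₂ + iY) - w)`, of norm at
most `2r`; and `Real` is an isometry intertwining `P_E` with `P_{Real(E)}`, while
`Real(X₁ + i X₂) = Ẑ`.
-/

open Complex in
theorem norm_map_add_I_smul_sub_le {V W F : Type*} [AddCommGroup V] [Module ℂ V]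
    [NormedAddCommGroup W] [NormedSpace ℂ W] [FunLike F V W] [LinearMapClass F ℂ V W] (Q : F)
    {z₁ z₂ : V} {w : W} {r : ℝ}
    (h₁ : ‖Q z₁ - w‖ ≤ r) (h₂ : ‖Q z₂ - w‖ ≤ r) :
    ‖Q (z₁ + I • z₂) - (w + I • w)‖ ≤ 2 * r := by
  have hsplit : Q (z₁ + I • z₂) - (w + I • w) = (Q z₁ - w) + I • (Q z₂ - w) := by
    rw [map_add, map_smul, smul_sub]
    abel
  calc ‖Q (z₁ + I • z₂) - (w + I • w)‖ ≤ ‖Q z₁ - w‖ + ‖I • (Q z₂ - w)‖ := by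
        rw [hsplit]; exact norm_add_le _ _
    _ = ‖Q z₁ - w‖ + ‖Q z₂ - w‖ := by rw [norm_smul, norm_I, one_mul]
    _ ≤ 2 * r := by linarith

theorem ProbabilityTheory.IndepFun.measure_inter_preimage_eq_sq {Ω α : Type*} [MeasurableSpace Ω]
    [MeasurableSpace α] {μ : Measure Ω} {X X₁ X₂ : Ω → α} (hindep : IndepFun X₁ X₂ μ)
    (hX : AEMeasurable X μ) (hX₁ : AEMeasurable X₁ μ) (hX₂ : AEMeasurable X₂ μ)
    (hlaw₁ : μ.map X₁ = μ.map X) (hlaw₂ : μ.map X₂ = μ.map X) {T : Set α} (hT : MeasurableSet T) :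
    μ (X₁ ⁻¹' T ∩ X₂ ⁻¹' T) = μ (X ⁻¹' T) ^ 2 := by
  rw [hindep.measure_inter_preimage_eq_mul T T hT hT,
    (IdentDistrib.mk hX₁ hX hlaw₁).measure_mem_eq hT,
    (IdentDistrib.mk hX₂ hX hlaw₂).measure_mem_eq hT, sq]

theorem ENNReal.le_rpow_one_div_two_of_sq_le {a b : ENNReal} (h : a ^ 2 ≤ b) :
    a ≤ b ^ (1 / 2 : ℝ) := by
  rwa [one_div, ENNReal.le_rpow_inv_iff two_pos, ENNReal.rpow_two]

section Realify

variable {N : ℕ}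

theorem norm_realifyL (z : EuclideanSpace ℂ (Fin N)) : ‖realifyL N z‖ = ‖z‖ := by
  rw [EuclideanSpace.norm_eq, EuclideanSpace.norm_eq, Fintype.sum_sum_type,
    ← Finset.sum_add_distrib]
  congr 1
  refine Finset.sum_congr rfl fun j _ => ?_
  rw [Complex.sq_norm, Complex.normSq_apply]
  simp [realifyL, sq]

theorem inner_realifyL (z w : EuclideanSpace ℂ (Fin N)) :
    inner ℝ (realifyL N z) (realifyL N w) = (inner ℂ z w).re := by
  rw [PiLp.inner_apply, PiLp.inner_apply, Fintype.sum_sum_type, Complex.re_sum,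
    ← Finset.sum_add_distrib]
  refine Finset.sum_congr rfl fun j _ => ?_
  simp [realifyL, Complex.mul_re]

theorem starProjection_realifySub (E : Submodule ℂ (EuclideanSpace ℂ (Fin N)))
    (v : EuclideanSpace ℂ (Fin N)) :
    (realifySub E).starProjection (realifyL N v) = realifyL N (E.starProjection v) := by
  refine Submodule.eq_starProjection_of_mem_of_inner_eq_zero
    ⟨_, E.starProjection_apply_mem v, rfl⟩ ?_
  rintro _ ⟨e, he, rfl⟩
  rw [← map_sub, inner_realifyL, E.starProjection_inner_eq_zero v e he, Complex.zero_re]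

def complexify (x y : Fin N → ℝ) : EuclideanSpace ℂ (Fin N) :=
  WithLp.toLp 2 fun j => x j + y j * Complex.I

theorem realifyL_complexify (x y : Fin N → ℝ) :
    realifyL N (complexify x y) = WithLp.toLp 2 (Sum.elim x y) := by
  ext (j | j) <;> simp [realifyL, complexify]

theorem complexify_add_complexify_neg (x₁ x₂ y : Fin N → ℝ) :
    complexify x₁ x₂ + complexify (-y) y = complexify x₁ y + Complex.I • complexify x₂ y := by
  ext j
  simp only [complexify, PiLp.add_apply, PiLp.smul_apply, Pi.neg_apply, smul_eq_mul]
  push_cast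
  linear_combination -(y j : ℂ) * Complex.I_sq

theorem continuous_complexify_left (y : Fin N → ℝ) :
    Continuous fun x : EuclideanSpace ℝ (Fin N) => complexify x y := by
  unfold complexify
  fun_prop

/-- The centre is shifted by `complexify (-y) y = iy + i • iy`, which absorbs the two copies of the
deterministic imaginary part. -/
theorem norm_starProjection_realifySub_sub_le (E : Submodule ℂ (EuclideanSpace ℂ (Fin N)))
    {x₁ x₂ y : Fin N → ℝ} {w : EuclideanSpace ℂ (Fin N)} {r : ℝ}
    (h₁ : ‖E.starProjection (complexify x₁ y) - w‖ ≤ r)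
    (h₂ : ‖E.starProjection (complexify x₂ y) - w‖ ≤ r) :
    ‖(realifySub E).starProjection (WithLp.toLp 2 (Sum.elim x₁ x₂)) -
      realifyL N (w + Complex.I • w - E.starProjection (complexify (-y) y))‖ ≤ 2 * r := by
  rw [← realifyL_complexify, starProjection_realifySub, ← map_sub, norm_realifyL,
    sub_sub_eq_add_sub, ← map_add, complexify_add_complexify_neg]
  exact norm_map_add_I_smul_sub_le E.starProjection h₁ h₂

end Realify

section LevyConc

variable {Ω : Type} [MeasureSpace Ω] {F : Type*} [NormedAddCommGroup F]

theorem measure_le_levyConc (W : Ω → F) (r : ℝ) (w : F) :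
    ℙ {ω | ‖W ω - w‖ ≤ r} ≤ levyConc W r :=
  le_iSup (fun w => ℙ {ω | ‖W ω - w‖ ≤ r}) w

theorem levyConc_le_iff {W : Ω → F} {r : ℝ} {a : ENNReal} :
    levyConc W r ≤ a ↔ ∀ w, ℙ {ω | ‖W ω - w‖ ≤ r} ≤ a :=
  iSup_le_iff

end LevyConc

theorem randomizing_all_coordinates_general
    (N : ℕ) (Ω : Type) [MeasureSpace Ω]
    (Z : Ω → EuclideanSpace ℂ (Fin N)) (hZ : ∀ i, Measurable fun ω => Z ω i)
    -- the imaginary part of `Z` is deterministic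
    (Y : Fin N → ℝ) (hY : ∀ ω i, (Z ω i).im = Y i)
    -- `X₁, X₂` are independent copies of the real part `X` of `Z`
    (X₁ X₂ : Ω → EuclideanSpace ℝ (Fin N)) (hX₁ : Measurable X₁) (hX₂ : Measurable X₂)
    (hlaw₁ : Measure.map X₁ ℙ =
      Measure.map (fun ω => (WithLp.equiv 2 (Fin N → ℝ)).symm fun i => (Z ω i).re) ℙ)
    (hlaw₂ : Measure.map X₂ ℙ =
      Measure.map (fun ω => (WithLp.equiv 2 (Fin N → ℝ)).symm fun i => (Z ω i).re) ℙ)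
    (hindep : IndepFun X₁ X₂ ℙ)
    (E : Submodule ℂ (EuclideanSpace ℂ (Fin N)))
    (r : ℝ) :
    levyConc (fun ω => (Submodule.orthogonalProjectionOnto E (Z ω) : EuclideanSpace ℂ (Fin N))) r ≤
      (levyConc (fun ω =>
        (Submodule.orthogonalProjectionOnto (realifySub E)
          ((WithLp.equiv 2 (Fin N ⊕ Fin N → ℝ)).symm (Sum.elim (X₁ ω) (X₂ ω)) :
            EuclideanSpace ℝ (Fin N ⊕ Fin N)) :
          EuclideanSpace ℝ (Fin N ⊕ Fin N))) (2 * r)) ^ (1 / 2 : ℝ) := by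
  set X : Ω → EuclideanSpace ℝ (Fin N) :=
    fun ω => (WithLp.equiv 2 (Fin N → ℝ)).symm fun i => (Z ω i).re
  have hX : Measurable X := (WithLp.measurable_toLp 2 _).comp
    (measurable_pi_lambda _ fun i => Complex.measurable_re.comp (hZ i))
  have hZX : ∀ ω, Z ω = complexify (X ω) Y := fun ω => by
    ext i
    simp [X, complexify, ← hY ω i]
  refine levyConc_le_iff.2 fun w => ?_
  set T := {x : EuclideanSpace ℝ (Fin N) | ‖E.starProjection (complexify x Y) - w‖ ≤ r}
  have hT : MeasurableSet T := (isClosed_le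
    ((E.starProjection.continuous.comp (continuous_complexify_left Y)).sub continuous_const).norm
    continuous_const).measurableSet
  have hevent : {ω | ‖(E.orthogonalProjectionOnto (Z ω) : EuclideanSpace ℂ (Fin N)) - w‖ ≤ r}
      = X ⁻¹' T := by
    ext ω
    simp [T, hZX ω]
  rw [hevent]
  calc ℙ (X ⁻¹' T) ≤ ℙ (X₁ ⁻¹' T ∩ X₂ ⁻¹' T) ^ (1 / 2 : ℝ) :=
        ENNReal.le_rpow_one_div_two_of_sq_le (hindep.measure_inter_preimage_eq_sq hX.aemeasurable
          hX₁.aemeasurable hX₂.aemeasurable hlaw₁ hlaw₂ hT).ge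
    _ ≤ _ := by
      gcongr
      exact (measure_mono fun ω hω => norm_starProjection_realifySub_sub_le E hω.1 hω.2).trans
        (measure_le_levyConc _ _ _)

/-- Randomizing all coordinates (Lemma "Randomizing all coordinates"): the Lévy
concentration function of the projection of `Z = X + iY` (with fixed `Y`) onto a complex
subspace `E` is controlled by that of the projection of `Ẑ = (X₁, X₂)` onto `Real(E)`. -/
theorem randomizing_all_coordinates
    (N : ℕ) (Ω : Type) [MeasureSpace Ω] [IsProbabilityMeasure (ℙ : Measure Ω)]
    (Z : Ω → EuclideanSpace ℂ (Fin N)) (hZ : ∀ i, Measurable fun ω => Z ω i)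
    -- the imaginary part of `Z` is deterministic
    (Y : Fin N → ℝ) (hY : ∀ ω i, (Z ω i).im = Y i)
    -- `X₁, X₂` are independent copies of the real part `X` of `Z`
    (X₁ X₂ : Ω → EuclideanSpace ℝ (Fin N)) (hX₁ : Measurable X₁) (hX₂ : Measurable X₂)
    (hlaw₁ : Measure.map X₁ ℙ =
      Measure.map (fun ω => (WithLp.equiv 2 (Fin N → ℝ)).symm fun i => (Z ω i).re) ℙ)
    (hlaw₂ : Measure.map X₂ ℙ =
      Measure.map (fun ω => (WithLp.equiv 2 (Fin N → ℝ)).symm fun i => (Z ω i).re) ℙ)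
    (hindep : IndepFun X₁ X₂ ℙ)
    (E : Submodule ℂ (EuclideanSpace ℂ (Fin N)))
    (r : ℝ) (hr : 0 ≤ r) :
    levyConc (fun ω => (Submodule.orthogonalProjectionOnto E (Z ω) : EuclideanSpace ℂ (Fin N))) r ≤
      (levyConc (fun ω =>
        (Submodule.orthogonalProjectionOnto (realifySub E)
          ((WithLp.equiv 2 (Fin N ⊕ Fin N → ℝ)).symm (Sum.elim (X₁ ω) (X₂ ω)) :
            EuclideanSpace ℝ (Fin N ⊕ Fin N)) :
          EuclideanSpace ℝ (Fin N ⊕ Fin N))) (2 * r)) ^ (1 / 2 : ℝ) :=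
  randomizing_all_coordinates_general N Ω Z hZ Y hY X₁ X₂ hX₁ hX₂ hlaw₁ hlaw₂ hindep E r
end

section
/- Let A be an m×n complex matrix decomposed into blocks A = [B; G], where B is an m₁×n matrix, G is an m₂×n matrix and m = m₁ + m₂. Consider an orthogonal decomposition ℂⁿ = E⁻ ⊕ E⁺ where E⁻ and E⁺ are spanned by two complementary sets of eigenvectors of B*B. Let s_A = s_min(A), s_B = inf over unit vectors x ∈ E⁺ of ‖Bx‖₂, and s_G = inf over unit vectors x ∈ E⁻ of ‖Gx‖₂. Then s_A ≥ s_B · s_G / (4‖A‖). -/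
/-!
Split a unit vector `x = p + q` with `p ∈ E⁻` and `q ∈ E⁺`. Invariance of `E⁻` under `B* B`
makes `B p` and `B q` orthogonal, so `‖A x‖ ≥ ‖B x‖ ≥ ‖B q‖ ≥ s_B ‖q‖`, while
`‖A x‖ ≥ ‖G x‖ ≥ ‖G p‖ - ‖G q‖ ≥ s_G ‖p‖ - ‖A‖ ‖q‖`. Since `‖p‖ + ‖q‖ ≥ 1`, either
`‖q‖ ≥ s_G / (4 ‖A‖)` and the first bound suffices, or `‖q‖ ≤ 1/4`, `‖p‖ ≥ 3/4` and the second
gives `‖A x‖ ≥ s_G / 2 ≥ s_B s_G / (4 ‖A‖)`.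
-/

open Matrix

open Metric
open scoped InnerProductSpace

-- `sInf ∅ = 0`, so `infNormOn f S = 0` when `S` contains no unit vector.
noncomputable def infNormOn {E F : Type*} [NormedAddCommGroup E] [Norm F] (f : E → F)
    (S : Set E) : ℝ :=
  sInf ((fun x => ‖f x‖) '' (S ∩ sphere 0 1))

section infNormOn

variable {𝕜 E F F' : Type*} [RCLike 𝕜] [NormedAddCommGroup E] [NormedSpace 𝕜 E]
  [SeminormedAddCommGroup F] [NormedSpace 𝕜 F] [SeminormedAddCommGroup F']

theorem infNormOn_nonneg (f : E → F') (S : Set E) : 0 ≤ infNormOn f S :=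
  Real.sInf_nonneg (by rintro _ ⟨x, -, rfl⟩; exact norm_nonneg _)

theorem infNormOn_le_norm {f : E → F'} {S : Set E} {x : E} (hxS : x ∈ S) (hx : ‖x‖ = 1) :
    infNormOn f S ≤ ‖f x‖ :=
  csInf_le ⟨0, by rintro _ ⟨y, -, rfl⟩; exact norm_nonneg _⟩
    ⟨x, ⟨hxS, mem_sphere_zero_iff_norm.2 hx⟩, rfl⟩

theorem le_infNormOn {f : E → F'} {S : Set E} {c : ℝ} (hS : (S ∩ sphere (0 : E) 1).Nonempty)
    (h : ∀ x ∈ S, ‖x‖ = 1 → c ≤ ‖f x‖) : c ≤ infNormOn f S :=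
  le_csInf (hS.image _) <| by
    rintro _ ⟨x, ⟨hxS, hx⟩, rfl⟩
    exact h x hxS (mem_sphere_zero_iff_norm.1 hx)

theorem infNormOn_mul_norm_le (T : E →ₗ[𝕜] F) {S : Submodule 𝕜 E} {x : E} (hx : x ∈ S) :
    infNormOn T S * ‖x‖ ≤ ‖T x‖ := by
  obtain rfl | hx0 := eq_or_ne x 0
  · simp
  have hunit := infNormOn_le_norm (f := T) (S.smul_mem ((‖x‖ : 𝕜)⁻¹) hx)
    (norm_smul_inv_norm hx0)
  rw [map_smul, norm_smul, norm_inv, RCLike.norm_ofReal, abs_norm] at hunit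
  rwa [← le_div_iff₀ (norm_pos_iff.2 hx0), div_eq_inv_mul]

theorem infNormOn_le_opNorm (A : E →L[𝕜] F) {f : E → F'} (hf : ∀ x, ‖f x‖ ≤ ‖A x‖)
    (S : Set E) : infNormOn f S ≤ ‖A‖ := by
  obtain hS | ⟨x, hxS, hx⟩ := (S ∩ sphere (0 : E) 1).eq_empty_or_nonempty
  · rw [infNormOn, hS, Set.image_empty, Real.sInf_empty]
    exact norm_nonneg A
  rw [mem_sphere_zero_iff_norm] at hx
  calc infNormOn f S ≤ ‖f x‖ := infNormOn_le_norm hxS hx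
    _ ≤ ‖A x‖ := hf x
    _ ≤ ‖A‖ := by simpa [hx] using A.le_opNorm x

end infNormOn

theorem mul_div_four_mul_le {s t M a b r : ℝ} (hs : 0 ≤ s) (ht : 0 ≤ t) (hsM : s ≤ M)
    (htM : t ≤ M) (ha : 0 ≤ a) (hab : 1 ≤ a + b) (h₁ : s * a ≤ r) (h₂ : t * b - M * a ≤ r) :
    s * t / (4 * M) ≤ r := by
  obtain rfl | hM := (hs.trans hsM).eq_or_lt
  · rw [mul_zero, div_zero]
    exact (mul_nonneg hs ha).trans h₁
  obtain hta | hat := le_or_gt (t / (4 * M)) a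
  · calc s * t / (4 * M) = s * (t / (4 * M)) := mul_div_assoc ..
      _ ≤ s * a := mul_le_mul_of_nonneg_left hta hs
      _ ≤ r := h₁
  · have hMa : 4 * (M * a) < t := by rw [lt_div_iff₀' (by positivity)] at hat; linarith
    have ha4 : 4 * a ≤ 1 := le_of_mul_le_mul_left (by nlinarith) hM
    calc s * t / (4 * M) ≤ M * t / (4 * M) := by gcongr
      _ = t / 4 := by field_simp
      _ ≤ r := by nlinarith

section Decomposition

variable {𝕜 E F F₁ F₂ : Type*} [RCLike 𝕜] [NormedAddCommGroup E] [InnerProductSpace 𝕜 E]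

theorem inner_apply_eq_zero_of_adjoint_comp_self_mem [NormedAddCommGroup F]
    [InnerProductSpace 𝕜 F] [FiniteDimensional 𝕜 E] [FiniteDimensional 𝕜 F] (T : E →ₗ[𝕜] F)
    {S : Submodule 𝕜 E} (hS : ∀ p ∈ S, LinearMap.adjoint T (T p) ∈ S) {p q : E} (hp : p ∈ S)
    (hq : q ∈ Sᗮ) : ⟪T p, T q⟫_𝕜 = 0 := by
  rw [← LinearMap.adjoint_inner_left]
  exact Submodule.inner_right_of_mem_orthogonal (hS p hp) hq

variable (S : Submodule 𝕜 E) [S.HasOrthogonalProjection]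

theorem infNormOn_orthogonal_mul_norm_sub_starProjection_le [NormedAddCommGroup F]
    [InnerProductSpace 𝕜 F] (T : E →ₗ[𝕜] F) (horth : ∀ p ∈ S, ∀ q ∈ Sᗮ, ⟪T p, T q⟫_𝕜 = 0)
    (y : E) : infNormOn T Sᗮ * ‖y - S.starProjection y‖ ≤ ‖T y‖ := by
  set p := S.starProjection y
  have hpyth : ‖T y‖ * ‖T y‖ = ‖T p‖ * ‖T p‖ + ‖T (y - p)‖ * ‖T (y - p)‖ := by
    rw [← norm_add_sq_eq_norm_sq_add_norm_sq_of_inner_eq_zero _ _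
      (horth p (S.starProjection_apply_mem y) _ (S.sub_starProjection_mem_orthogonal y)),
      ← map_add, add_sub_cancel]
  calc infNormOn T Sᗮ * ‖y - p‖ ≤ ‖T (y - p)‖ :=
        infNormOn_mul_norm_le T (S.sub_starProjection_mem_orthogonal y)
    _ ≤ ‖T y‖ := (mul_self_le_mul_self_iff (norm_nonneg _) (norm_nonneg _)).2 <| by
        rw [hpyth]; exact le_add_of_nonneg_left (mul_self_nonneg _)

theorem infNormOn_mul_norm_starProjection_sub_le [SeminormedAddCommGroup F] [NormedSpace 𝕜 F]
    [SeminormedAddCommGroup F₂] [NormedSpace 𝕜 F₂] (T : E →ₗ[𝕜] F₂) (A : E →L[𝕜] F)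
    (hTA : ∀ x, ‖T x‖ ≤ ‖A x‖) (y : E) :
    infNormOn T S * ‖S.starProjection y‖ - ‖A‖ * ‖y - S.starProjection y‖ ≤ ‖A y‖ := by
  set p := S.starProjection y
  have hTp : ‖T p‖ ≤ ‖T y‖ + ‖T (y - p)‖ := by
    simpa [map_sub] using norm_sub_le (T y) (T (y - p))
  have hp := infNormOn_mul_norm_le T (S.starProjection_apply_mem y)
  have hy := hTA y
  have hq := (hTA (y - p)).trans (A.le_opNorm (y - p))
  linarith

theorem infNormOn_mul_infNormOn_div_le_infNormOn_univ [SeminormedAddCommGroup F]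
    [NormedSpace 𝕜 F] [NormedAddCommGroup F₁] [InnerProductSpace 𝕜 F₁]
    [SeminormedAddCommGroup F₂] [NormedSpace 𝕜 F₂] (A : E →L[𝕜] F) (B : E →ₗ[𝕜] F₁)
    (G : E →ₗ[𝕜] F₂) (hB : ∀ x, ‖B x‖ ≤ ‖A x‖) (hG : ∀ x, ‖G x‖ ≤ ‖A x‖)
    (horth : ∀ p ∈ S, ∀ q ∈ Sᗮ, ⟪B p, B q⟫_𝕜 = 0) :
    infNormOn B Sᗮ * infNormOn G S / (4 * ‖A‖) ≤ infNormOn A Set.univ := by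
  obtain hE | hE := subsingleton_or_nontrivial E
  · rw [Subsingleton.elim A 0, norm_zero, mul_zero, div_zero]
    exact infNormOn_nonneg _ _
  obtain ⟨⟨x, hx⟩⟩ := NormedSpace.sphere_nonempty_rclike 𝕜 (E := E) zero_le_one
  refine le_infNormOn ⟨x, trivial, hx⟩ fun y _ hy => ?_
  exact mul_div_four_mul_le (infNormOn_nonneg _ _) (infNormOn_nonneg _ _)
    (infNormOn_le_opNorm A hB _) (infNormOn_le_opNorm A hG _) (norm_nonneg _)
    (hy ▸ norm_le_norm_sub_add y (S.starProjection y))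
    ((infNormOn_orthogonal_mul_norm_sub_starProjection_le S B horth y).trans (hB y))
    (infNormOn_mul_norm_starProjection_sub_le S G A hG y)

end Decomposition

section Matrix

variable {m n : Type*} [Fintype m] [Fintype n] [DecidableEq n]

omit [DecidableEq n] in
theorem eNormC_eq_norm_toLp (v : n → ℂ) : eNormC v = ‖WithLp.toLp 2 v‖ := by
  rw [EuclideanSpace.norm_eq]; rfl

theorem sInf_setOf_eNormC_mulVec_eq_infNormOn (M : Matrix m n ℂ)
    (S : Submodule ℂ (EuclideanSpace ℂ n)) :
    sInf {r | ∃ x : EuclideanSpace ℂ n, x ∈ S ∧ ‖x‖ = 1 ∧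
      r = eNormC (M *ᵥ (WithLp.equiv 2 (n → ℂ)) x)} = infNormOn (toEuclideanLin M) S := by
  rw [infNormOn]
  congr 1
  ext r
  simp only [Set.mem_ofPred_eq, Set.mem_image, Set.mem_inter_iff, mem_sphere_zero_iff_norm,
    SetLike.mem_coe, toLpLin_apply, WithLp.equiv_apply, eNormC_eq_norm_toLp]
  constructor
  · rintro ⟨x, hxS, hx, rfl⟩
    exact ⟨x, ⟨hxS, hx⟩, rfl⟩
  · rintro ⟨x, ⟨hxS, hx⟩, rfl⟩
    exact ⟨x, hxS, hx, rfl⟩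

theorem setOf_eNormC_unit_eq_image (M : Matrix m n ℂ) :
    {r | ∃ x : n → ℂ, eNormC x = 1 ∧ r = eNormC (M *ᵥ x)} =
      (fun x => ‖(toEuclideanLin M).toContinuousLinearMap x‖) '' sphere 0 1 := by
  ext r
  simp only [Set.mem_ofPred_eq, Set.mem_image, mem_sphere_zero_iff_norm,
    LinearMap.coe_toContinuousLinearMap', toLpLin_apply, eNormC_eq_norm_toLp]
  constructor
  · rintro ⟨x, hx, rfl⟩
    exact ⟨WithLp.toLp 2 x, hx, rfl⟩
  · rintro ⟨x, hx, rfl⟩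
    exact ⟨x.ofLp, hx, rfl⟩

theorem toEuclideanLin_conjTranspose_mul_self {𝕜 : Type*} [RCLike 𝕜] [DecidableEq m]
    (M : Matrix m n 𝕜) :
    toEuclideanLin (Mᴴ * M) = LinearMap.adjoint (toEuclideanLin M) ∘ₗ toEuclideanLin M := by
  rw [← toEuclideanLin_conjTranspose_eq_adjoint, toLpLin_mul_same]

theorem norm_toEuclideanLin_fromRows_sq {𝕜 m₁ m₂ : Type*} [RCLike 𝕜] [Fintype m₁] [Fintype m₂]
    (B : Matrix m₁ n 𝕜) (G : Matrix m₂ n 𝕜) (x : EuclideanSpace 𝕜 n) :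
    ‖toEuclideanLin (fromRows B G) x‖ ^ 2 =
      ‖toEuclideanLin B x‖ ^ 2 + ‖toEuclideanLin G x‖ ^ 2 := by
  simp [EuclideanSpace.norm_sq_eq, Fintype.sum_sum_type, fromRows_mulVec]

theorem norm_toEuclideanLin_le_fromRows_left {𝕜 m₁ m₂ : Type*} [RCLike 𝕜] [Fintype m₁]
    [Fintype m₂] (B : Matrix m₁ n 𝕜) (G : Matrix m₂ n 𝕜) (x : EuclideanSpace 𝕜 n) :
    ‖toEuclideanLin B x‖ ≤ ‖toEuclideanLin (fromRows B G) x‖ :=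
  (sq_le_sq₀ (norm_nonneg _) (norm_nonneg _)).1 <| by
    rw [norm_toEuclideanLin_fromRows_sq]
    exact le_add_of_nonneg_right (sq_nonneg _)

theorem norm_toEuclideanLin_le_fromRows_right {𝕜 m₁ m₂ : Type*} [RCLike 𝕜] [Fintype m₁]
    [Fintype m₂] (B : Matrix m₁ n 𝕜) (G : Matrix m₂ n 𝕜) (x : EuclideanSpace 𝕜 n) :
    ‖toEuclideanLin G x‖ ≤ ‖toEuclideanLin (fromRows B G) x‖ :=
  (sq_le_sq₀ (norm_nonneg _) (norm_nonneg _)).1 <| by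
    rw [norm_toEuclideanLin_fromRows_sq]
    exact le_add_of_nonneg_left (sq_nonneg _)

end Matrix

/-- Decomposition lemma (Lemma "Decomposition"): a lower bound for the smallest singular
value of a block matrix `A = [B; G]`, given lower bounds for `B` on `E⁺` and for `G` on
`E⁻`, where `ℂⁿ = E⁻ ⊕ E⁺` is an orthogonal decomposition into spans of complementary
sets of eigenvectors of `B* B`. -/
theorem decomposition_smallest_singular_value
    (m₁ m₂ n : ℕ) (B : Matrix (Fin m₁) (Fin n) ℂ) (G : Matrix (Fin m₂) (Fin n) ℂ)
    (Eminus Eplus : Submodule ℂ (EuclideanSpace ℂ (Fin n)))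
    -- orthogonal decomposition `ℂⁿ = E⁻ ⊕ E⁺`
    (hperp : Eplus = Eminusᗮ)
    -- `E⁻` (and hence also `E⁺`) is an invariant subspace of the Hermitian matrix `B* B`,
    -- i.e. `E⁻` and `E⁺` are spanned by complementary sets of eigenvectors of `B* B`
    (hinv : ∀ x : EuclideanSpace ℂ (Fin n), x ∈ Eminus →
      ((WithLp.equiv 2 (Fin n → ℂ)).symm
        ((Bᴴ * B) *ᵥ (WithLp.equiv 2 (Fin n → ℂ)) x)) ∈ Eminus) :
    -- `s_A ≥ s_B s_G / (4 ‖A‖)`, where `A = [B; G]`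
    sInf {r | ∃ x : EuclideanSpace ℂ (Fin n), x ∈ Eplus ∧ ‖x‖ = 1 ∧
        r = eNormC (B *ᵥ (WithLp.equiv 2 (Fin n → ℂ)) x)} *
      sInf {r | ∃ x : EuclideanSpace ℂ (Fin n), x ∈ Eminus ∧ ‖x‖ = 1 ∧
        r = eNormC (G *ᵥ (WithLp.equiv 2 (Fin n → ℂ)) x)} /
      (4 * sSup {r | ∃ x : Fin n → ℂ, eNormC x = 1 ∧
        r = eNormC (fromRows B G *ᵥ x)}) ≤
    sInf {r | ∃ x : Fin n → ℂ, eNormC x = 1 ∧ r = eNormC (fromRows B G *ᵥ x)} := by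
  subst hperp
  have hBB (p) (hp : p ∈ Eminus) :
      LinearMap.adjoint (toEuclideanLin B) (toEuclideanLin B p) ∈ Eminus := by
    rw [← LinearMap.comp_apply, ← toEuclideanLin_conjTranspose_mul_self]
    exact hinv p hp
  rw [sInf_setOf_eNormC_mulVec_eq_infNormOn, sInf_setOf_eNormC_mulVec_eq_infNormOn,
    setOf_eNormC_unit_eq_image, ContinuousLinearMap.sSup_sphere_eq_norm,
    ← Set.univ_inter (sphere _ _)]
  exact infNormOn_mul_infNormOn_div_le_infNormOn_univ Eminus _ _ _
    (norm_toEuclideanLin_le_fromRows_left B G) (norm_toEuclideanLin_le_fromRows_right B G)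
    fun p hp q hq => inner_apply_eq_zero_of_adjoint_comp_self_mem _ hBB hp hq
end
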